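/- arXiv:2112.08525 — 8 statements merged into one kernel-verified Lean document; each statement's English description precedes it below -/
import Mathlib

section
/- There exists a universal constant δ > 0 such that the following holds for all sufficiently large n: if 𝒢 is any finite collection of graphs on [n] = {1,…,n} with the property that every triangle-free graph on [n] is a subgraph of some member of 𝒢, then Σ_{G∈𝒢} exp(−δ·(C(n,2) − e(G))/√n) ≥ 1/2, where C(n,2) = n(n−1)/2 is the number of edges of the complete graph on [n]. -/
/-!
Let `f(H)` be the probability that the `p`-random subset of an edge set `H` is triangle-free.
Adding a new edge `uv` to `H` can lower `f` by at most a factor `1 - 4np³`: the new edge only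
hurts if the random subset contains a path `u - w - v`, and each of the `n` choices of `w` costs
at most `(p / (1 - p))² ≤ 4p²`. So for a container `G` with `m` non-edges, the probability that
the random subset of `K_n` lies in `G` and is triangle-free is
`(1 - p)ᵐ f(G) ≤ ((1 - p) / (1 - 4np³))ᵐ f(K_n)`. Every triangle-free graph lies in a container,
so `1 ≤ ∑_G ((1 - p) / (1 - 4np³))ᵐ`, and `p = 1 / (4√n)` makes the ratio at most `exp(-1/(8√n))`.
-/

open Finset Real

variable {V : Type*}

theorem Finset.sum_le_sum_sum_of_subset_biUnion {ι α : Type*} [DecidableEq α] {f : α → ℝ}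
    (hf : ∀ x, 0 ≤ f x) {s : Finset α} {I : Finset ι} {t : ι → Finset α}
    (hs : s ⊆ I.biUnion t) : ∑ x ∈ s, f x ≤ ∑ i ∈ I, ∑ x ∈ t i, f x := by
  classical
  refine (sum_le_sum_of_subset_of_nonneg hs fun x _ _ => hf x).trans ?_
  clear hs
  induction I using Finset.induction_on with
  | empty => simp
  | insert i I hi ih =>
    rw [biUnion_insert, sum_insert hi]
    calc ∑ x ∈ t i ∪ I.biUnion t, f x
        ≤ ∑ x ∈ t i ∪ I.biUnion t, f x + ∑ x ∈ t i ∩ I.biUnion t, f x :=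
          le_add_of_nonneg_right (sum_nonneg fun x _ => hf x)
      _ = ∑ x ∈ t i, f x + ∑ x ∈ I.biUnion t, f x := sum_union_inter
      _ ≤ _ := by gcongr

theorem one_sub_div_four_le_exp_mul {t : ℝ} (ht0 : 0 ≤ t) (ht : t ≤ 16) :
    1 - t / 4 ≤ exp (-(t / 8)) * (1 - t / 16) := by
  have hexp : 1 - t / 8 ≤ exp (-(t / 8)) := by linarith [add_one_le_exp (-(t / 8))]
  nlinarith [mul_le_mul_of_nonneg_right hexp (by linarith : (0 : ℝ) ≤ 1 - t / 16)]

def IsTriangleFree (A : Finset (Sym2 V)) : Prop :=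
  ∀ u v w, s(u, v) ∈ A → s(u, w) ∈ A → s(v, w) ∈ A → False

namespace IsTriangleFree

instance [Fintype V] [DecidableEq V] : DecidablePred (IsTriangleFree (V := V)) := fun A => by
  unfold IsTriangleFree; infer_instance

theorem empty : IsTriangleFree (∅ : Finset (Sym2 V)) := fun _ _ _ h => absurd h (notMem_empty _)

theorem mono {A B : Finset (Sym2 V)} (hAB : A ⊆ B) (hB : IsTriangleFree B) : IsTriangleFree A :=
  fun u v w huv huw hvw => hB u v w (hAB huv) (hAB huw) (hAB hvw)

theorem not_isDiag {A : Finset (Sym2 V)} (hA : IsTriangleFree A) {e : Sym2 V} (he : e ∈ A) :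
    ¬ e.IsDiag := by
  induction e using Sym2.ind with
  | _ u v =>
    intro huv
    rw [Sym2.mk_isDiag_iff] at huv
    subst huv
    exact hA u u u he he he

theorem exists_common_neighbor [DecidableEq V] {B : Finset (Sym2 V)} {u v : V} (huv : u ≠ v)
    (hB : IsTriangleFree B) (h : ¬ IsTriangleFree (insert s(u, v) B)) :
    ∃ w, s(u, w) ∈ B ∧ s(v, w) ∈ B := by
  have hloop : ∀ x, s(x, x) ∉ B := fun x hx => hB.not_isDiag hx rfl
  simp only [IsTriangleFree, not_forall, imp_false, not_not, mem_insert, Sym2.eq_iff] at h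
  obtain ⟨x, y, z, hxy, hxz, hyz⟩ := h
  grind [Sym2.eq_swap, IsTriangleFree]

theorem cliqueFree_fromEdgeSet [DecidableEq V] {A : Finset (Sym2 V)} (hA : IsTriangleFree A) :
    (SimpleGraph.fromEdgeSet (A : Set (Sym2 V))).CliqueFree 3 := by
  intro t ht
  obtain ⟨x, y, z, hxy, hxz, hyz, -⟩ := SimpleGraph.is3Clique_iff.mp ht
  rw [SimpleGraph.fromEdgeSet_adj] at hxy hxz hyz
  exact hA x y z hxy.1 hxz.1 hyz.1

end IsTriangleFree

section TriangleFreeProb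

variable [Fintype V] [DecidableEq V] {p : ℝ}

/-- The probability that the `p`-random subset of `H` is triangle-free. -/
noncomputable def triangleFreeProb (p : ℝ) (H : Finset (Sym2 V)) : ℝ :=
  ∑ A ∈ H.powerset with IsTriangleFree A, p ^ #A * (1 - p) ^ (#H - #A)

theorem triangleFreeProb_pos (hp0 : 0 ≤ p) (hp1 : p < 1) (H : Finset (Sym2 V)) :
    0 < triangleFreeProb p H := by
  have hq : 0 < 1 - p := by linarith
  exact sum_pos' (fun A _ => by positivity)
    ⟨∅, by simpa using IsTriangleFree.empty, by simpa using pow_pos hq _⟩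

theorem triangleFreeProb_insert {e : Sym2 V} {H : Finset (Sym2 V)} (he : e ∉ H) :
    triangleFreeProb p (insert e H) = (1 - p) * triangleFreeProb p H +
      p * ∑ B ∈ H.powerset with IsTriangleFree (insert e B), p ^ #B * (1 - p) ^ (#H - #B) := by
  simp only [triangleFreeProb, sum_filter, sum_powerset_insert he, card_insert_of_notMem he,
    mul_sum]
  congr 1
  · refine sum_congr rfl fun B hB => ?_
    have hBH : #B ≤ #H := card_le_card (mem_powerset.mp hB)
    split_ifs
    · rw [show #H + 1 - #B = #H - #B + 1 by omega, pow_succ]; ring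
    · simp
  · refine sum_congr rfl fun B hB => ?_
    have hBH : #B ≤ #H := card_le_card (mem_powerset.mp hB)
    have heB : e ∉ B := fun h => he (mem_powerset.mp hB h)
    split_ifs
    · rw [card_insert_of_notMem heB, show #H + 1 - (#B + 1) = #H - #B by omega, pow_succ]; ring
    · simp

/-- Deleting `a` and `b` injects these sets into the triangle-free subsets of `H`, and multiplies
the weight by `((1 - p) / p) ^ 2`. -/
theorem sum_mem_mem_le_triangleFreeProb (hp0 : 0 ≤ p) (hp1 : p < 1) (H : Finset (Sym2 V))
    {a b : Sym2 V} (hab : a ≠ b) :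
    ∑ B ∈ H.powerset with IsTriangleFree B ∧ a ∈ B ∧ b ∈ B, p ^ #B * (1 - p) ^ (#H - #B) ≤
      (p / (1 - p)) ^ 2 * triangleFreeProb p H := by
  have hq : 0 < 1 - p := by linarith
  set D := {B ∈ H.powerset | IsTriangleFree B ∧ a ∈ B ∧ b ∈ B}
  have hpair : ∀ B ∈ D, {a, b} ⊆ B := fun B hB => by
    simp only [D, mem_filter] at hB; simp [insert_subset_iff, hB.2.2]
  have hweight : ∀ B ∈ D, p ^ #B * (1 - p) ^ (#H - #B) =
      (p / (1 - p)) ^ 2 * (p ^ #(B \ {a, b}) * (1 - p) ^ (#H - #(B \ {a, b}))) := by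
    intro B hB
    have hBH : #B ≤ #H := card_le_card (mem_powerset.mp (mem_filter.mp hB).1)
    have hcard : #(B \ {a, b}) + 2 = #B := by
      rw [card_sdiff_of_subset (hpair B hB), card_pair hab]
      have := card_le_card (hpair B hB); rw [card_pair hab] at this; omega
    rw [← hcard, show #H - #(B \ {a, b}) = #H - (#(B \ {a, b}) + 2) + 2 by omega]
    field_simp
    ring
  rw [sum_congr rfl hweight, ← mul_sum, triangleFreeProb]
  gcongr
  rw [← sum_image (g := (· \ {a, b})) (f := fun C => p ^ #C * (1 - p) ^ (#H - #C))]
  · refine sum_le_sum_of_subset_of_nonneg ?_ fun C _ _ => by positivity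
    intro C hC
    obtain ⟨B, hB, rfl⟩ := mem_image.mp hC
    obtain ⟨hBH, hBtf, -⟩ := mem_filter.mp hB
    exact mem_filter.mpr ⟨mem_powerset.mpr (sdiff_subset.trans (mem_powerset.mp hBH)),
      hBtf.mono sdiff_subset⟩
  · intro B hB B' hB' h
    rw [← sdiff_union_of_subset (hpair B hB), ← sdiff_union_of_subset (hpair B' hB')]
    exact congrArg (· ∪ {a, b}) h

theorem mul_triangleFreeProb_le_insert (hp0 : 0 ≤ p) (hp : p ≤ 1 / 2) {e : Sym2 V}
    {H : Finset (Sym2 V)} (he : ¬ e.IsDiag) (heH : e ∉ H) :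
    (1 - 4 * Fintype.card V * p ^ 3) * triangleFreeProb p H ≤ triangleFreeProb p (insert e H) := by
  induction e using Sym2.ind with
  | _ u v =>
  have huv : u ≠ v := fun h => he (Sym2.mk_isDiag_iff.mpr h)
  have hq : 0 < 1 - p := by linarith
  set w : Finset (Sym2 V) → ℝ := fun B => p ^ #B * (1 - p) ^ (#H - #B)
  have hw : ∀ B, 0 ≤ w B := fun B => by positivity
  set f := triangleFreeProb p H with hf
  set g := ∑ B ∈ H.powerset with IsTriangleFree (insert s(u, v) B), w B
  have hsplit : f = g + ∑ B ∈ H.powerset with IsTriangleFree B ∧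
      ¬ IsTriangleFree (insert s(u, v) B), w B := by
    rw [hf, triangleFreeProb,
      ← sum_filter_add_sum_filter_not _ (IsTriangleFree <| insert s(u, v) ·),
      filter_filter, filter_filter]
    congr 2
    exact filter_congr fun B _ => ⟨And.right, fun h => ⟨h.mono (subset_insert _ _), h⟩⟩
  have hbad : ∑ B ∈ H.powerset with IsTriangleFree B ∧ ¬ IsTriangleFree (insert s(u, v) B), w B ≤
      Fintype.card V * (4 * p ^ 2 * f) := by
    calc _ ≤ ∑ x : V, ∑ B ∈ H.powerset with IsTriangleFree B ∧ s(u, x) ∈ B ∧ s(v, x) ∈ B, w B := by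
          refine sum_le_sum_sum_of_subset_biUnion hw fun B hB => ?_
          obtain ⟨hBH, hB, hB'⟩ := mem_filter.mp hB
          obtain ⟨x, hux, hvx⟩ := hB.exists_common_neighbor huv hB'
          exact mem_biUnion.mpr ⟨x, mem_univ x, mem_filter.mpr ⟨hBH, hB, hux, hvx⟩⟩
      _ ≤ ∑ _x : V, 4 * p ^ 2 * f := by
          refine sum_le_sum fun x _ =>
            (sum_mem_mem_le_triangleFreeProb hp0 (by linarith) H ?_).trans ?_
          · rw [Ne, Sym2.eq_iff]; grind
          · gcongr
            · exact (triangleFreeProb_pos hp0 (by linarith) H).le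
            · have hq2 : 1 / 4 ≤ (1 - p) ^ 2 := by nlinarith
              rw [div_pow, div_le_iff₀ (by positivity)]
              nlinarith [mul_le_mul_of_nonneg_left hq2 (sq_nonneg p)]
      _ = Fintype.card V * (4 * p ^ 2 * f) := by simp
  rw [triangleFreeProb_insert heH]
  nlinarith [mul_le_mul_of_nonneg_left hbad hp0]

theorem pow_mul_triangleFreeProb_le_union (hp0 : 0 ≤ p) (hp : p ≤ 1 / 2)
    (hc : 0 ≤ 1 - 4 * Fintype.card V * p ^ 3) {E S : Finset (Sym2 V)}
    (hS : ∀ e ∈ S, ¬ e.IsDiag) (hES : Disjoint E S) :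
    (1 - 4 * Fintype.card V * p ^ 3) ^ #S * triangleFreeProb p E ≤ triangleFreeProb p (E ∪ S) := by
  induction S using Finset.induction_on with
  | empty => simp
  | insert e S he ih =>
    rw [disjoint_insert_right] at hES
    rw [card_insert_of_notMem he, pow_succ', mul_assoc, union_insert]
    calc _ ≤ (1 - 4 * Fintype.card V * p ^ 3) * triangleFreeProb p (E ∪ S) :=
          mul_le_mul_of_nonneg_left (ih (fun x hx => hS x (mem_insert_of_mem hx)) hES.2) hc
      _ ≤ _ := mul_triangleFreeProb_le_insert hp0 hp (hS e (mem_insert_self e S))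
          (by simp [he, hES.1])

theorem sum_powerset_filter_eq_pow_mul_triangleFreeProb {E K : Finset (Sym2 V)} (hEK : E ⊆ K) :
    ∑ A ∈ E.powerset with IsTriangleFree A, p ^ #A * (1 - p) ^ (#K - #A) =
      (1 - p) ^ (#K - #E) * triangleFreeProb p E := by
  rw [triangleFreeProb, mul_sum]
  refine sum_congr rfl fun A hA => ?_
  have hAE : #A ≤ #E := card_le_card (mem_powerset.mp (mem_filter.mp hA).1)
  have hEK : #E ≤ #K := card_le_card hEK
  rw [show #K - #A = (#K - #E) + (#E - #A) by omega, pow_add]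
  ring

end TriangleFreeProb

theorem one_le_sum_pow_of_forall_cliqueFree_le [Fintype V] {p r : ℝ} (hp0 : 0 ≤ p)
    (hp : p ≤ 1 / 2) (hc : 0 ≤ 1 - 4 * Fintype.card V * p ^ 3)
    (hr : 1 - p ≤ r * (1 - 4 * Fintype.card V * p ^ 3)) (𝓖 : Finset (SimpleGraph V))
    (h𝓖 : ∀ T : SimpleGraph V, T.CliqueFree 3 → ∃ G ∈ 𝓖, T ≤ G) :
    1 ≤ ∑ G ∈ 𝓖, r ^ ((Fintype.card V).choose 2 - G.edgeSet.ncard) := by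
  classical
  set c := 1 - 4 * Fintype.card V * p ^ 3
  have hq : 0 ≤ 1 - p := by linarith
  set K := (⊤ : SimpleGraph V).edgeFinset
  have hr0 : 0 ≤ r := by
    by_contra! h
    nlinarith [mul_nonpos_of_nonpos_of_nonneg h.le hc]
  have hKG : ∀ G : SimpleGraph V, G.edgeFinset ⊆ K := fun G => SimpleGraph.edgeFinset_mono le_top
  have hcover : triangleFreeProb p K ≤ ∑ G ∈ 𝓖,
      ∑ A ∈ G.edgeFinset.powerset with IsTriangleFree A, p ^ #A * (1 - p) ^ (#K - #A) := by
    refine sum_le_sum_sum_of_subset_biUnion (fun A => by positivity) fun A hA => ?_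
    obtain ⟨-, hA⟩ := mem_filter.mp hA
    obtain ⟨G, hG, hAG⟩ := h𝓖 _ hA.cliqueFree_fromEdgeSet
    have hAG : A ⊆ G.edgeFinset := fun e he =>
      G.mem_edgeFinset.mpr ((G.fromEdgeSet_le.mp hAG) ⟨he, hA.not_isDiag he⟩)
    exact mem_biUnion.mpr ⟨G, hG, mem_filter.mpr ⟨mem_powerset.mpr hAG, hA⟩⟩
  have hcontainer : ∀ G : SimpleGraph V,
      ∑ A ∈ G.edgeFinset.powerset with IsTriangleFree A, p ^ #A * (1 - p) ^ (#K - #A) ≤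
        r ^ ((Fintype.card V).choose 2 - G.edgeSet.ncard) * triangleFreeProb p K := by
    intro G
    have hm : #(K \ G.edgeFinset) = (Fintype.card V).choose 2 - G.edgeSet.ncard := by
      rw [card_sdiff_of_subset (hKG G), SimpleGraph.card_edgeFinset_top_eq_card_choose_two,
        ← SimpleGraph.coe_edgeFinset, Set.ncard_coe_finset]
    have hchain := pow_mul_triangleFreeProb_le_union hp0 hp hc
      (fun e he => (⊤ : SimpleGraph V).not_isDiag_of_mem_edgeSet
        (SimpleGraph.mem_edgeFinset.mp (mem_sdiff.mp he).1))
      (disjoint_sdiff (s := G.edgeFinset) (t := K))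
    rw [union_sdiff_of_subset (hKG G), hm] at hchain
    rw [sum_powerset_filter_eq_pow_mul_triangleFreeProb (hKG G), ← card_sdiff_of_subset (hKG G),
      hm]
    calc (1 - p) ^ _ * triangleFreeProb p G.edgeFinset
        ≤ (r * c) ^ ((Fintype.card V).choose 2 - G.edgeSet.ncard) *
            triangleFreeProb p G.edgeFinset := by
          gcongr
          exact (triangleFreeProb_pos hp0 (by linarith) _).le
      _ = r ^ _ * (c ^ _ * triangleFreeProb p G.edgeFinset) := by rw [mul_pow, mul_assoc]
      _ ≤ _ := by gcongr
  have hpos := triangleFreeProb_pos hp0 (by linarith : p < 1) K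
  have := hcover.trans (sum_le_sum fun G _ => hcontainer G)
  rw [← sum_mul] at this
  exact le_of_mul_le_mul_right (by simpa using this) hpos

theorem one_le_sum_exp_of_forall_cliqueFree_le [Fintype V] [Nonempty V]
    (𝓖 : Finset (SimpleGraph V)) (h𝓖 : ∀ T : SimpleGraph V, T.CliqueFree 3 → ∃ G ∈ 𝓖, T ≤ G) :
    1 ≤ ∑ G ∈ 𝓖, exp (-(((Fintype.card V).choose 2 - G.edgeSet.ncard : ℕ) : ℝ) /
      (8 * √(Fintype.card V))) := by
  set n := Fintype.card V
  have hn : (1 : ℝ) ≤ n := by exact_mod_cast Fintype.card_pos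
  set t := (√n)⁻¹
  have ht0 : 0 < t := by positivity
  have ht1 : t ≤ 1 := inv_le_one_of_one_le₀ (one_le_sqrt.mpr hn)
  have hnt : n * t ^ 2 = 1 := by
    rw [inv_pow, sq_sqrt (by positivity), mul_inv_cancel₀ (by positivity)]
  have hcube : 4 * n * (t / 4) ^ 3 = t / 16 := by linear_combination (t / 16) * hnt
  have key := one_le_sum_pow_of_forall_cliqueFree_le (p := t / 4) (r := exp (-(t / 8)))
    (by positivity) (by linarith) (by rw [hcube]; linarith)
    (by rw [hcube]; exact one_sub_div_four_le_exp_mul ht0.le (by linarith)) 𝓖 h𝓖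
  refine key.trans_eq (sum_congr rfl fun G _ => ?_)
  rw [← exp_nat_mul]
  congr 1
  ring

/-- There exists δ > 0 such that for all sufficiently large n: if 𝒢 is a
finite collection of graphs on [n] such that every triangle-free graph on [n] is a
subgraph of some member of 𝒢, then Σ_{G∈𝒢} exp(−δ·(C(n,2) − e(G))/√n) ≥ 1/2. -/
theorem stmt1 :
    ∃ δ : ℝ, 0 < δ ∧ ∃ N : ℕ, ∀ n : ℕ, N ≤ n →
      ∀ 𝓖 : Finset (SimpleGraph (Fin n)),
        (∀ T : SimpleGraph (Fin n), T.CliqueFree 3 → ∃ G ∈ 𝓖, T ≤ G) →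
        (1 : ℝ) / 2 ≤
          ∑ G ∈ 𝓖, Real.exp (-δ * ((n.choose 2 - G.edgeSet.ncard : ℕ) : ℝ) / Real.sqrt n) := by
  refine ⟨1 / 8, by norm_num, 1, fun n hn 𝓖 h𝓖 => ?_⟩
  have : Nonempty (Fin n) := ⟨⟨0, hn⟩⟩
  have key := one_le_sum_exp_of_forall_cliqueFree_le 𝓖 h𝓖
  simp only [Fintype.card_fin] at key
  calc (1 : ℝ) / 2 ≤ 1 := by norm_num
    _ ≤ _ := key
    _ = _ := sum_congr rfl fun G _ => by congr 1; ring
end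

section
/- Let H be a bipartite graph on [n] with m edges, let p ∈ (0,1], and let U be a random subset of [n] in which each vertex is included independently with probability p. Let X be the number of edges of H with both endpoints in U (the number of edges of the induced subgraph H[U]), and let Z be the indicator random variable of the event |U| ≤ 5pn. Then E[exp(ZX/(5pn))] ≤ exp(pm/n). -/
/-!
Let `A ⊔ B` be a bipartition of `H` and condition on `S = U ∩ A`. Every edge of `H[U]` joins a
vertex `b ∈ U ∩ B` to `S`, and on `|U| ≤ 5pn` each `|N(b) ∩ S| ≤ 5pn`, so
`ZX/(5pn) ≤ ∑_{b ∈ U ∩ B} x_b` with `x_b = min(|N(b) ∩ S|, 5pn)/(5pn) ∈ [0, 1]`.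
By convexity `eˣ ≤ 1 + (e - 1)x` on `[0, 1]`, hence `1 - p + p eˣ ≤ exp (p(e - 1)x)`, and averaging
over `U ∩ B` gives at most `exp ((e - 1)/(5n) ∑_{a ∈ S} deg a)`. As `deg a ≤ n`, the same bound
applies when averaging over `S`, giving `exp (p(e - 1)² m/(5n)) ≤ exp (pm/n)` since `(e - 1)² ≤ 5`.
-/

open Finset

namespace Real

theorem exp_le_one_add_exp_one_sub_one_mul {x : ℝ} (hx0 : 0 ≤ x) (hx1 : x ≤ 1) :
    exp x ≤ 1 + (exp 1 - 1) * x := by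
  have h := convexOn_exp.2 (Set.mem_univ 0) (Set.mem_univ 1) (sub_nonneg.2 hx1) hx0
    (sub_add_cancel 1 x)
  simp only [smul_eq_mul, mul_zero, mul_one, zero_add, exp_zero] at h
  linarith

theorem one_sub_add_mul_exp_le_exp {p x : ℝ} (hp : 0 ≤ p) (hx0 : 0 ≤ x) (hx1 : x ≤ 1) :
    1 - p + p * exp x ≤ exp (p * (exp 1 - 1) * x) :=
  calc 1 - p + p * exp x ≤ 1 - p + p * (1 + (exp 1 - 1) * x) := by
        gcongr; exact exp_le_one_add_exp_one_sub_one_mul hx0 hx1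
    _ = p * (exp 1 - 1) * x + 1 := by ring
    _ ≤ exp (p * (exp 1 - 1) * x) := add_one_le_exp _

theorem exp_one_sub_one_nonneg : 0 ≤ exp 1 - 1 :=
  sub_nonneg.2 (one_le_exp zero_le_one)

theorem exp_one_sub_one_le_two : exp 1 - 1 ≤ 2 := by
  linarith [exp_one_lt_d9]

theorem sq_exp_one_sub_one_le_five : (exp 1 - 1) ^ 2 ≤ 5 := by
  nlinarith [exp_one_lt_d9, exp_one_gt_d9]

end Real

section BernoulliSubset

variable {V : Type*}

/-- The probability that a `p`-random subset of `W` equals `U ⊆ W`. -/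
def bernoulliWeight (p : ℝ) (W U : Finset V) : ℝ := p ^ #U * (1 - p) ^ (#W - #U)

theorem bernoulliWeight_nonneg {p : ℝ} (hp0 : 0 ≤ p) (hp1 : p ≤ 1) (W U : Finset V) :
    0 ≤ bernoulliWeight p W U := by
  unfold bernoulliWeight; have := sub_nonneg.2 hp1; positivity

theorem sum_bernoulliWeight_mul_prod (p : ℝ) (W : Finset V) (g : V → ℝ) :
    ∑ T ∈ W.powerset, bernoulliWeight p W T * ∏ v ∈ T, g v = ∏ v ∈ W, (1 - p + p * g v) := by
  classical
  simp_rw [add_comm (1 - p), prod_add, bernoulliWeight]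
  refine sum_congr rfl fun T hT => ?_
  rw [prod_mul_distrib, prod_const, prod_const, card_sdiff_of_subset (mem_powerset.1 hT)]
  ring

theorem sum_bernoulliWeight_mul_exp_sum_le {p : ℝ} (hp0 : 0 ≤ p) (hp1 : p ≤ 1) (W : Finset V)
    (x : V → ℝ) (hx0 : ∀ v ∈ W, 0 ≤ x v) (hx1 : ∀ v ∈ W, x v ≤ 1) :
    ∑ T ∈ W.powerset, bernoulliWeight p W T * Real.exp (∑ v ∈ T, x v) ≤
      Real.exp (p * (Real.exp 1 - 1) * ∑ v ∈ W, x v) := by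
  simp_rw [Real.exp_sum, sum_bernoulliWeight_mul_prod, mul_sum, Real.exp_sum]
  exact prod_le_prod (fun v _ => add_nonneg (sub_nonneg.2 hp1) (by positivity))
    fun v hv => Real.one_sub_add_mul_exp_le_exp hp0 (hx0 v hv) (hx1 v hv)

theorem bernoulliWeight_union [DecidableEq V] (p : ℝ) {A B S T : Finset V} (hAB : Disjoint A B)
    (hS : S ⊆ A) (hT : T ⊆ B) :
    bernoulliWeight p (A ∪ B) (S ∪ T) = bernoulliWeight p A S * bernoulliWeight p B T := by
  have hST : Disjoint S T := hAB.mono hS hT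
  have := card_le_card hS
  have := card_le_card hT
  simp only [bernoulliWeight, card_union_of_disjoint hAB, card_union_of_disjoint hST,
    show #A + #B - (#S + #T) = (#A - #S) + (#B - #T) by omega, pow_add]
  ring

theorem sum_eq_sum_powerset_sum_powerset_compl {M : Type*} [AddCommMonoid M] [Fintype V]
    [DecidableEq V] (A : Finset V) (F : Finset V → M) :
    ∑ U, F U = ∑ S ∈ A.powerset, ∑ T ∈ Aᶜ.powerset, F (S ∪ T) := by
  rw [← sum_product']
  refine sum_nbij' (fun U => (U ∩ A, U \ A)) (fun q => q.1 ∪ q.2) ?_ ?_ ?_ ?_ ?_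
  · intro U _
    simp only [mem_product, mem_powerset]
    exact ⟨inter_subset_right, fun v hv => by simpa using (mem_sdiff.1 hv).2⟩
  · simp
  · intro U _
    exact sup_inf_sdiff U A
  · rintro ⟨S, T⟩ h
    simp only [mem_product, mem_powerset, subset_compl_iff_disjoint_right] at h
    simp only [union_inter_distrib_right, inter_eq_left.2 h.1, disjoint_iff_inter_eq_empty.1 h.2,
      union_empty, union_sdiff_distrib, sdiff_eq_empty_iff_subset.2 h.1, h.2.sdiff_eq_left,
      empty_union]
  · intro U _
    exact congrArg F (sup_inf_sdiff U A).symm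

theorem sum_bernoulliWeight_univ_eq_sum_powerset [Fintype V] [DecidableEq V] (p : ℝ)
    (A : Finset V) (F : Finset V → ℝ) :
    ∑ U, bernoulliWeight p univ U * F U = ∑ S ∈ A.powerset,
      bernoulliWeight p A S * ∑ T ∈ Aᶜ.powerset, bernoulliWeight p Aᶜ T * F (S ∪ T) := by
  rw [sum_eq_sum_powerset_sum_powerset_compl A, ← union_compl A]
  refine sum_congr rfl fun S hS => ?_
  rw [union_compl, mul_sum]
  refine sum_congr rfl fun T hT => ?_
  rw [← union_compl A, bernoulliWeight_union p disjoint_compl_right (mem_powerset.1 hS)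
    (mem_powerset.1 hT), mul_assoc]

end BernoulliSubset

namespace SimpleGraph

variable {V : Type*} {G : SimpleGraph V} [DecidableRel G.Adj]

theorem IsBipartiteWith.ncard_edgeSet_inter_le [DecidableEq V] {A B S T : Finset V}
    (h : G.IsBipartiteWith ↑A ↑B) (hS : S ⊆ A) (hT : Disjoint T A) :
    (G.edgeSet ∩ {e | ∀ v ∈ e, v ∈ S ∪ T}).ncard ≤ ∑ b ∈ T, #{a ∈ S | G.Adj b a} := by
  rw [← card_sigma, ← Set.ncard_coe_finset]
  refine (Set.ncard_le_ncard ?_ (Set.toFinite _)).trans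
    (Set.ncard_image_le (f := fun q : (_ : V) × V => s(q.1, q.2)) (Set.toFinite _))
  rintro ⟨x, y⟩ ⟨hxy, hmem⟩
  have hx : x ∈ S ∪ T := hmem x (Sym2.mem_mk_left x y)
  have hy : y ∈ S ∪ T := hmem y (Sym2.mem_mk_right x y)
  have notMem_T {v} (hv : v ∈ A) : v ∉ T := fun hvT => Finset.disjoint_left.1 hT hvT hv
  have notMem_S {v} (hv : v ∈ B) : v ∉ S := fun hvS =>
    Finset.disjoint_left.1 (disjoint_coe.1 h.disjoint) (hS hvS) hv
  rcases h.mem_of_adj hxy with ⟨hxA, hyB⟩ | ⟨hxB, hyA⟩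
  · refine ⟨⟨y, x⟩, ?_, Sym2.eq_swap⟩
    simp only [coe_sigma, Set.mem_sigma_iff, mem_coe, mem_filter]
    exact ⟨(mem_union.1 hy).resolve_left (notMem_S hyB),
      (mem_union.1 hx).resolve_right (notMem_T hxA), hxy.symm⟩
  · refine ⟨⟨x, y⟩, ?_, rfl⟩
    simp only [coe_sigma, Set.mem_sigma_iff, mem_coe, mem_filter]
    exact ⟨(mem_union.1 hx).resolve_left (notMem_S hxB),
      (mem_union.1 hy).resolve_right (notMem_T hyA), hxy⟩

theorem sum_card_filter_adj_le_sum_degree [Fintype V] (S B : Finset V) :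
    ∑ b ∈ B, #{a ∈ S | G.Adj b a} ≤ ∑ a ∈ S, G.degree a := by
  have := Finset.sum_card_bipartiteAbove_eq_sum_card_bipartiteBelow (s := B) (t := S) G.Adj
  simp only [bipartiteAbove, bipartiteBelow] at this
  rw [this]
  refine sum_le_sum fun a _ => ?_
  rw [← card_neighborFinset_eq_degree, neighborFinset_eq_filter]
  exact card_le_card fun b => by simp +contextual [G.adj_comm]

theorem sum_min_card_filter_adj_div_le [Fintype V] (S B : Finset V) {c : ℝ} (hc : 0 ≤ c) :
    ∑ b ∈ B, min (#{a ∈ S | G.Adj b a} : ℝ) c / c ≤ (∑ a ∈ S, G.degree a : ℕ) / c := by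
  rw [← sum_div]
  gcongr
  calc ∑ b ∈ B, min (#{a ∈ S | G.Adj b a} : ℝ) c
      ≤ ∑ b ∈ B, (#{a ∈ S | G.Adj b a} : ℝ) := sum_le_sum fun b _ => min_le_left _ _
    _ ≤ (∑ a ∈ S, G.degree a : ℕ) := by exact_mod_cast sum_card_filter_adj_le_sum_degree S B

theorem IsBipartiteWith.indicator_mul_ncard_edgeSet_inter_le [DecidableEq V] {A B S T : Finset V}
    (h : G.IsBipartiteWith ↑A ↑B) (hS : S ⊆ A) (hT : Disjoint T A) {c : ℝ} (hc : 0 ≤ c) :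
    (if (#(S ∪ T) : ℝ) ≤ c then 1 else 0) * ((G.edgeSet ∩ {e | ∀ v ∈ e, v ∈ S ∪ T}).ncard : ℝ) ≤
      ∑ b ∈ T, min (#{a ∈ S | G.Adj b a} : ℝ) c := by
  split_ifs with hSTc
  · rw [one_mul]
    calc ((G.edgeSet ∩ {e | ∀ v ∈ e, v ∈ S ∪ T}).ncard : ℝ)
        ≤ ∑ b ∈ T, (#{a ∈ S | G.Adj b a} : ℝ) := by
          exact_mod_cast h.ncard_edgeSet_inter_le hS hT
      _ = ∑ b ∈ T, min (#{a ∈ S | G.Adj b a} : ℝ) c := by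
          refine sum_congr rfl fun b _ => (min_eq_left (le_trans ?_ hSTc)).symm
          exact_mod_cast card_le_card (filter_subset _ S |>.trans subset_union_left)
  · rw [zero_mul]
    exact sum_nonneg fun b _ => le_min (Nat.cast_nonneg _) hc

/-- The average over `U ∩ Aᶜ` with `U ∩ A = S` fixed. -/
theorem IsBipartiteWith.sum_bernoulliWeight_compl_mul_exp_le [Fintype V] [DecidableEq V]
    {A B S : Finset V} (h : G.IsBipartiteWith ↑A ↑B) (hS : S ⊆ A) {p r : ℝ} (hp0 : 0 < p)
    (hp1 : p ≤ 1) (hr : 0 ≤ r) :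
    ∑ T ∈ Aᶜ.powerset, bernoulliWeight p Aᶜ T *
        Real.exp ((if (#(S ∪ T) : ℝ) ≤ 5 * p * r then 1 else 0) *
          ((G.edgeSet ∩ {e | ∀ v ∈ e, v ∈ S ∪ T}).ncard : ℝ) / (5 * p * r)) ≤
      Real.exp (∑ a ∈ S, (Real.exp 1 - 1) * G.degree a / (5 * r)) := by
  set c := 5 * p * r
  have hc : 0 ≤ c := by positivity
  set x : V → ℝ := fun b => min (#{a ∈ S | G.Adj b a} : ℝ) c / c
  calc _ ≤ ∑ T ∈ Aᶜ.powerset, bernoulliWeight p Aᶜ T * Real.exp (∑ b ∈ T, x b) := by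
        refine sum_le_sum fun T hT => ?_
        gcongr
        · exact bernoulliWeight_nonneg hp0.le hp1 _ _
        rw [← sum_div]
        gcongr
        exact h.indicator_mul_ncard_edgeSet_inter_le hS
          (subset_compl_iff_disjoint_right.1 (mem_powerset.1 hT)) hc
    _ ≤ Real.exp (p * (Real.exp 1 - 1) * ∑ b ∈ Aᶜ, x b) :=
        sum_bernoulliWeight_mul_exp_sum_le hp0.le hp1 _ _
          (fun b _ => div_nonneg (le_min (Nat.cast_nonneg _) hc) hc)
          (fun b _ => div_le_one_of_le₀ (min_le_right _ _) hc)
    _ ≤ Real.exp (∑ a ∈ S, (Real.exp 1 - 1) * G.degree a / (5 * r)) := by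
        have := Real.exp_one_sub_one_nonneg
        gcongr
        calc p * (Real.exp 1 - 1) * ∑ b ∈ Aᶜ, x b
            ≤ p * (Real.exp 1 - 1) * ((∑ a ∈ S, G.degree a : ℕ) / c) := by
              gcongr
              exact sum_min_card_filter_adj_div_le S Aᶜ hc
          _ = ∑ a ∈ S, (Real.exp 1 - 1) * G.degree a / (5 * r) := by
              rw [show c = p * (5 * r) by ring, mul_div_assoc', mul_assoc,
                mul_div_mul_left _ _ hp0.ne', Nat.cast_sum, mul_sum, sum_div]

end SimpleGraph

open Classical in
/-- Let H be a bipartite graph on [n] with m edges, p ∈ (0,1], and U a random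
subset of [n] including each vertex independently with probability p. With X the number of
edges of H inside U and Z the indicator of |U| ≤ 5pn, we have
E[exp(ZX/(5pn))] ≤ exp(pm/n). The expectation is written as an explicit finite sum over
all subsets U of [n], weighted by p^{|U|}(1-p)^{n-|U|}. -/
theorem stmt3 (n m : ℕ) (H : SimpleGraph (Fin n)) (hbip : H.Colorable 2)
    (hm : H.edgeSet.ncard = m) (p : ℝ) (hp0 : 0 < p) (hp1 : p ≤ 1) :
    ∑ U : Finset (Fin n), p ^ U.card * (1 - p) ^ (n - U.card) *
        Real.exp ((if (U.card : ℝ) ≤ 5 * p * n then (1 : ℝ) else 0) *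
          (((H.edgeSet ∩ {e : Sym2 (Fin n) | ∀ v ∈ e, v ∈ U}).ncard : ℝ)) / (5 * p * n)) ≤
      Real.exp (p * m / n) := by
  obtain ⟨s, t, hst⟩ := SimpleGraph.IsBipartite.exists_isBipartiteWith hbip
  have h : H.IsBipartiteWith ↑s.toFinset ↑t.toFinset := by simpa using hst
  set A := s.toFinset
  set x : Fin n → ℝ := fun a => (Real.exp 1 - 1) * H.degree a / (5 * n)
  have hx0 (a) : 0 ≤ x a := by
    have := Real.exp_one_sub_one_nonneg; positivity
  have hx1 (a) : x a ≤ 1 := by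
    have hdeg : (H.degree a : ℝ) ≤ n := by
      exact_mod_cast (H.degree_lt_card_verts a).le.trans_eq (Fintype.card_fin n)
    refine div_le_one_of_le₀ ?_ (by positivity)
    nlinarith [Real.exp_one_sub_one_le_two, hx0 a]
  calc _ = ∑ U, bernoulliWeight p univ U * Real.exp ((if (#U : ℝ) ≤ 5 * p * n then 1 else 0) *
          ((H.edgeSet ∩ {e | ∀ v ∈ e, v ∈ U}).ncard : ℝ) / (5 * p * n)) := by
        simp [bernoulliWeight]
    _ ≤ ∑ S ∈ A.powerset, bernoulliWeight p A S * Real.exp (∑ a ∈ S, x a) := by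
        rw [sum_bernoulliWeight_univ_eq_sum_powerset p A]
        refine sum_le_sum fun S hS => ?_
        gcongr
        · exact bernoulliWeight_nonneg hp0.le hp1 _ _
        exact h.sum_bernoulliWeight_compl_mul_exp_le (mem_powerset.1 hS) hp0 hp1 n.cast_nonneg
    _ ≤ Real.exp (p * (Real.exp 1 - 1) * ∑ a ∈ A, x a) :=
        sum_bernoulliWeight_mul_exp_sum_le hp0.le hp1 A x (fun a _ => hx0 a) (fun a _ => hx1 a)
    _ ≤ Real.exp (p * m / n) := by
        have hdeg : ∑ a ∈ A, H.degree a = m := by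
          rw [SimpleGraph.isBipartiteWith_sum_degrees_eq_card_edges h, ← hm,
            Set.ncard_eq_toFinset_card', SimpleGraph.edgeFinset]
        have hsum : ∑ a ∈ A, x a = (Real.exp 1 - 1) * m / (5 * n) := by
          rw [← sum_div, ← mul_sum, ← Nat.cast_sum, hdeg]
        rw [hsum]
        gcongr
        calc p * (Real.exp 1 - 1) * ((Real.exp 1 - 1) * m / (5 * n))
            = (Real.exp 1 - 1) ^ 2 / 5 * (p * m / n) := by ring
          _ ≤ p * m / n := mul_le_of_le_one_left (by positivity)
            (by linarith [Real.sq_exp_one_sub_one_le_five])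
end

section
/- There exist universal constants γ′, ε′ > 0 such that the following holds for all sufficiently large m, n ∈ ℕ: let H be a bipartite graph on [n] with m edges, and let D be the random digraph 𝔾⃗(n,p) with p ≤ ε′·n^{−1/2}. Then the probability that simultaneously e(H ∩ D̂) ≥ m/16 and Δ(D) ≤ 5pn − 1 is at most exp(−γ′·m·n^{−1/2}). -/
/-- For a digraph `D` on `[n]` (a set of ordered pairs of distinct vertices), `hatGraph D`
is the undirected graph whose edges are pairs of distinct vertices having a common
in-neighbour in `D`. -/
def hatGraph {n : ℕ} (D : Finset (Fin n × Fin n)) : SimpleGraph (Fin n) where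
  Adj u v := u ≠ v ∧ ∃ w, (w, u) ∈ D ∧ (w, v) ∈ D
  symm := by
    constructor
    rintro u v ⟨h, w, h1, h2⟩
    exact ⟨h.symm, w, h2, h1⟩
  loopless := by
    constructor
    rintro v ⟨h, -⟩
    exact h rfl

/-!
An edge `uv` (`u < v`) of `H ∩ D̂` is spanned by the heads of two arcs `(w, u), (w, v)` of `D`,
so `e(H ∩ D̂)` is at most the number `X` of such pairs; when all out-degrees are below
`K = 5pn`, capping each arc's number of partners at `K` does not change `X`. The exponential
moment of the capped count at `λ = 1/(4√n)` is bounded by exposing the arcs in increasing order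
of their heads: an arc without earlier partners costs a factor `exp (2pλ ν)`, where `ν` is its
number of later partners, and `ν` is charged to those partners. This gives
`E exp(λX) ≤ exp(8λp²nm) ≤ exp(λm/32)`, and Markov's inequality concludes.
-/

open Finset Real

section BernoulliSum

variable {α : Type*}

/-- The expectation of `g D` for the random subset `D ⊆ E` containing each element
independently with probability `p`. -/
def bernoulliSum (p : ℝ) (E : Finset α) (g : Finset α → ℝ) : ℝ :=
  ∑ D ∈ E.powerset, p ^ #D * (1 - p) ^ (#E - #D) * g D

lemma bernoulliSum_empty (p : ℝ) (g : Finset α → ℝ) : bernoulliSum p ∅ g = g ∅ := by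
  simp [bernoulliSum]

lemma bernoulliSum_insert [DecidableEq α] {a : α} {E : Finset α} (ha : a ∉ E) (p : ℝ)
    (g : Finset α → ℝ) :
    bernoulliSum p (insert a E) g
      = bernoulliSum p E (fun D => (1 - p) * g D + p * g (insert a D)) := by
  have haD : ∀ D ∈ E.powerset, a ∉ D := fun D hD h => ha (mem_powerset.1 hD h)
  have hcard : ∀ D ∈ E.powerset, #D ≤ #E := fun D hD => card_le_card (mem_powerset.1 hD)
  rw [bernoulliSum, powerset_insert, sum_union, sum_image, bernoulliSum, ← sum_add_distrib]
  · refine sum_congr rfl fun D hD => ?_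
    rw [card_insert_of_notMem ha, card_insert_of_notMem (haD D hD),
      Nat.succ_sub (hcard D hD), Nat.add_sub_add_right, pow_succ, pow_succ]
    ring
  · intro D hD D' hD' h
    rw [← erase_insert (haD D hD), ← erase_insert (haD D' hD')]
    exact congrArg (erase · a) h
  · refine disjoint_right.2 fun D hD hD' => ?_
    obtain ⟨D', hD', rfl⟩ := mem_image.1 hD
    exact haD _ hD' (mem_insert_self a D')

lemma bernoulliSum_mono {p : ℝ} (hp0 : 0 ≤ p) (hp1 : p ≤ 1) {E : Finset α}
    {g g' : Finset α → ℝ} (h : ∀ D ⊆ E, g D ≤ g' D) :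
    bernoulliSum p E g ≤ bernoulliSum p E g' := by
  refine sum_le_sum fun D hD => ?_
  have : 0 ≤ 1 - p := by linarith
  gcongr
  exact h D (mem_powerset.1 hD)

lemma bernoulliSum_const_mul (p C : ℝ) (E : Finset α) (g : Finset α → ℝ) :
    bernoulliSum p E (fun D => C * g D) = C * bernoulliSum p E g := by
  rw [bernoulliSum, bernoulliSum, mul_sum]
  exact sum_congr rfl fun D _ => by ring

lemma sum_ite_le_exp_mul_bernoulliSum {p : ℝ} (hp0 : 0 ≤ p) (hp1 : p ≤ 1) {lam t : ℝ}
    (hlam : 0 ≤ lam) {E : Finset α} (P : Finset α → Prop) [DecidablePred P]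
    (S : Finset α → ℝ) (hPS : ∀ D ⊆ E, P D → t ≤ S D) :
    ∑ D ∈ E.powerset, (if P D then p ^ #D * (1 - p) ^ (#E - #D) else 0)
      ≤ exp (-(lam * t)) * bernoulliSum p E (fun D => exp (lam * S D)) := by
  rw [bernoulliSum, mul_sum]
  refine sum_le_sum fun D hD => ?_
  have hw : 0 ≤ p ^ #D * (1 - p) ^ (#E - #D) := by
    have : 0 ≤ 1 - p := by linarith
    positivity
  split_ifs with hP
  · have : 1 ≤ exp (-(lam * t)) * exp (lam * S D) := by
      rw [← exp_add, one_le_exp_iff]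
      nlinarith [hPS D (mem_powerset.1 hD) hP]
    nlinarith
  · positivity

end BernoulliSum

lemma one_sub_add_mul_exp_le_exp {p x y : ℝ} (hp0 : 0 ≤ p) (hx0 : 0 ≤ x) (hx : x ≤ 1 / 2)
    (hxy : x ≤ y) : 1 - p + p * exp x ≤ exp (2 * p * y) := by
  have hexp : exp x ≤ 1 + 2 * x := by
    refine (exp_bound_div_one_sub_of_interval hx0 (by linarith)).trans ?_
    rw [div_le_iff₀ (by linarith)]
    nlinarith
  calc 1 - p + p * exp x ≤ 1 + 2 * p * y := by nlinarith
    _ ≤ exp (2 * p * y) := by linarith [add_one_le_exp (2 * p * y)]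

section CappedCount

variable {α : Type*} (R : α → α → Prop) [DecidableRel R]

def cappedCount (c : α → ℝ) (K : ℝ) (D : Finset α) : ℝ :=
  ∑ a ∈ D, (c a + min (#{b ∈ D | R a b} : ℝ) K)

variable {R}

lemma cappedCount_insert [DecidableEq α] {c : α → ℝ} {K : ℝ} {a : α} {D : Finset α}
    (ha : a ∉ D) (hmin : ∀ x ∈ insert a D, ¬ R x a) :
    cappedCount R c K (insert a D)
      = c a + min (#{b ∈ D | R a b} : ℝ) K + cappedCount R c K D := by
  have hfilter : ∀ x ∈ insert a D, {b ∈ insert a D | R x b} = {b ∈ D | R x b} :=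
    fun x hx => by rw [filter_insert, if_neg (hmin x hx)]
  rw [cappedCount, sum_insert ha, hfilter a (mem_insert_self a D), cappedCount]
  congr 1
  exact sum_congr rfl fun x hx => by rw [hfilter x (mem_insert_of_mem hx)]

lemma cappedCount_add_ite (c : α → ℝ) (K t : ℝ) (a : α) (D : Finset α) :
    cappedCount R (fun x => c x + if R a x then t else 0) K D
      = cappedCount R c K D + t * #{x ∈ D | R a x} := by
  rw [cappedCount, cappedCount, mul_comm, ← nsmul_eq_mul, ← sum_const, sum_filter,
    ← sum_add_distrib]
  exact sum_congr rfl fun x _ => by ring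

lemma natCast_card_filter_insert [DecidableEq α] {a : α} {s : Finset α} (ha : a ∉ s) (b : α) :
    (#{x ∈ insert a s | R x b} : ℝ) = #{x ∈ s | R x b} + if R a b then 1 else 0 := by
  rw [filter_insert]
  split_ifs
  · rw [card_insert_of_notMem (fun h => ha (mem_of_mem_filter a h))]
    push_cast
    ring
  · ring

/-- Peel off an element `a` of minimal rank. It has no `R`-predecessors, so adding it to `D` only
adds `c a + min ν K`, where `ν` counts its `R`-successors in `D`; averaging over `a ∈ D` costs at
most `exp (2pλ (c a + ν))`, and the term `2pλν` is pushed into the weights `c` of those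
successors. -/
theorem bernoulliSum_exp_cappedCount_le [DecidableEq α] {β : Type*} [LinearOrder β] (f : α → β)
    (hf : ∀ a b, R a b → f a < f b) {p lam K : ℝ} (hp0 : 0 ≤ p) (hp1 : p ≤ 1)
    (hlam : 0 ≤ lam) (hK : 0 ≤ K) (E : Finset α) :
    ∀ c : α → ℝ, (∀ b, 0 ≤ c b) →
      (∀ b ∈ E, lam * (c b + 2 * p * #{x ∈ E | R x b} + K) ≤ 1 / 2) →
      bernoulliSum p E (fun D => exp (lam * cappedCount R c K D))
        ≤ exp (lam * ∑ b ∈ E, 2 * p * (c b + 2 * p * #{x ∈ E | R x b})) := by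
  induction E using Finset.induction_on_min_value f with
  | empty => intro c _ _; simp [bernoulliSum_empty, cappedCount]
  | insert a s ha hmin ih =>
    intro c hc hE
    have hnot : ∀ x ∈ insert a s, ¬ R x a := by
      intro x hx hR
      rcases mem_insert.1 hx with rfl | hx
      · exact lt_irrefl _ (hf x x hR)
      · exact (hf x a hR).not_ge (hmin x hx)
    set c' : α → ℝ := fun x => c x + if R a x then 2 * p else 0
    have hc' : ∀ b, 0 ≤ c' b := fun b => add_nonneg (hc b) (by split_ifs <;> positivity)
    have hload : ∀ b, c' b + 2 * p * #{x ∈ s | R x b}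
        = c b + 2 * p * #{x ∈ insert a s | R x b} := by
      intro b
      rw [natCast_card_filter_insert ha]
      simp only [c']
      split_ifs <;> ring
    have hstep : ∀ D ⊆ s, (1 - p) * exp (lam * cappedCount R c K D)
          + p * exp (lam * cappedCount R c K (insert a D))
        ≤ exp (lam * (2 * p * c a)) * exp (lam * cappedCount R c' K D) := by
      intro D hD
      rw [cappedCount_insert (fun h => ha (hD h))
        (fun x hx => hnot x (insert_subset_insert a hD hx)), cappedCount_add_ite]
      set C := cappedCount R c K D
      set ν : ℝ := ((#{b ∈ D | R a b} : ℕ) : ℝ)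
      have hν : 0 ≤ ν := Nat.cast_nonneg _
      have hsmall : lam * (c a + min ν K) ≤ 1 / 2 := by
        refine le_trans ?_ (hE a (mem_insert_self a s))
        have : 0 ≤ 2 * p * (#{x ∈ insert a s | R x a} : ℝ) := by positivity
        exact mul_le_mul_of_nonneg_left (by linarith [min_le_right ν K]) hlam
      have hmean := one_sub_add_mul_exp_le_exp hp0
        (by have := hc a; have := le_min hν hK; positivity) hsmall
        (mul_le_mul_of_nonneg_left (by linarith [min_le_left ν K] : c a + min ν K ≤ c a + ν) hlam)
      calc (1 - p) * exp (lam * C) + p * exp (lam * (c a + min ν K + C))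
          = (1 - p + p * exp (lam * (c a + min ν K))) * exp (lam * C) := by
            rw [mul_add lam, exp_add]; ring
        _ ≤ exp (2 * p * (lam * (c a + ν))) * exp (lam * C) := by gcongr
        _ = exp (lam * (2 * p * c a)) * exp (lam * (C + 2 * p * ν)) := by
            rw [← exp_add, ← exp_add]; ring_nf
    calc bernoulliSum p (insert a s) (fun D => exp (lam * cappedCount R c K D))
        = bernoulliSum p s (fun D => (1 - p) * exp (lam * cappedCount R c K D)
            + p * exp (lam * cappedCount R c K (insert a D))) := bernoulliSum_insert ha p _
      _ ≤ bernoulliSum p s (fun D => exp (lam * (2 * p * c a))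
            * exp (lam * cappedCount R c' K D)) := bernoulliSum_mono hp0 hp1 hstep
      _ = exp (lam * (2 * p * c a))
            * bernoulliSum p s (fun D => exp (lam * cappedCount R c' K D)) :=
        bernoulliSum_const_mul _ _ _ _
      _ ≤ exp (lam * (2 * p * c a))
            * exp (lam * ∑ b ∈ s, 2 * p * (c' b + 2 * p * #{x ∈ s | R x b})) := by
        gcongr
        exact ih c' hc' fun b hb => by rw [hload]; exact hE b (mem_insert_of_mem hb)
      _ ≤ exp (lam * ∑ b ∈ insert a s, 2 * p * (c b + 2 * p * #{x ∈ insert a s | R x b})) := by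
        rw [← exp_add, sum_insert ha]
        simp only [hload]
        gcongr
        have : 0 ≤ lam * (2 * p * (2 * p * #{x ∈ insert a s | R x a})) := by positivity
        nlinarith

end CappedCount

section Cherries

variable {n : ℕ}

def IsCherry (H : SimpleGraph (Fin n)) (a b : Fin n × Fin n) : Prop :=
  a.1 = b.1 ∧ a.2 < b.2 ∧ H.Adj a.2 b.2

open Classical

lemma ncard_edgeSet_inf_hatGraph_le (H : SimpleGraph (Fin n)) (D : Finset (Fin n × Fin n)) :
    (H ⊓ hatGraph D).edgeSet.ncard ≤ ∑ a ∈ D, #{b ∈ D | IsCherry H a b} := by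
  rw [← card_sigma]
  have hcover : (H ⊓ hatGraph D).edgeSet
      ⊆ ((D.sigma fun a => {b ∈ D | IsCherry H a b}).image fun ab => s(ab.1.2, ab.2.2) :) := by
    intro e he
    induction e using Sym2.ind with
    | h u v =>
      obtain ⟨hH, huv, w, hu, hv⟩ := (SimpleGraph.mem_edgeSet _).1 he
      rw [coe_image]
      rcases huv.lt_or_gt with h | h
      · exact ⟨⟨(w, u), (w, v)⟩, mem_sigma.2 ⟨hu, mem_filter.2 ⟨hv, rfl, h, hH⟩⟩, rfl⟩
      · exact ⟨⟨(w, v), (w, u)⟩, mem_sigma.2 ⟨hv, mem_filter.2 ⟨hu, rfl, h, hH.symm⟩⟩,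
          Sym2.eq_swap⟩
  calc (H ⊓ hatGraph D).edgeSet.ncard
      ≤ ((D.sigma fun a => {b ∈ D | IsCherry H a b}).image fun ab => s(ab.1.2, ab.2.2) :
          Set (Sym2 (Fin n))).ncard := Set.ncard_le_ncard hcover (finite_toSet _)
    _ ≤ _ := by rw [Set.ncard_coe_finset]; exact card_image_le

lemma ncard_edgeSet_inf_hatGraph_le_cappedCount (H : SimpleGraph (Fin n))
    (D : Finset (Fin n × Fin n)) {K : ℝ} (hK : ∀ v, (#{e ∈ D | e.1 = v} : ℝ) ≤ K) :
    ((H ⊓ hatGraph D).edgeSet.ncard : ℝ) ≤ cappedCount (IsCherry H) 0 K D := by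
  refine (Nat.cast_le.2 (ncard_edgeSet_inf_hatGraph_le H D)).trans ?_
  push_cast
  refine sum_le_sum fun a _ => ?_
  rw [Pi.zero_apply, zero_add]
  refine le_min le_rfl (le_trans ?_ (hK a.1))
  refine Nat.cast_le.2 (card_le_card fun b hb => ?_)
  rw [mem_filter] at hb ⊢
  exact ⟨hb.1, hb.2.1.symm⟩

lemma card_filter_isCherry_le_degree (H : SimpleGraph (Fin n)) (S : Finset (Fin n × Fin n))
    (b : Fin n × Fin n) : #{x ∈ S | IsCherry H x b} ≤ H.degree b.2 := by
  rw [← SimpleGraph.card_neighborFinset_eq_degree]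
  refine card_le_card_of_injOn Prod.snd (fun x hx => ?_) fun x hx y hy hxy => ?_
  · exact (SimpleGraph.mem_neighborFinset _ _ _).2 (mem_filter.1 hx).2.2.2.symm
  · exact Prod.ext ((mem_filter.1 hx).2.1.trans (mem_filter.1 hy).2.1.symm) hxy

lemma sum_card_filter_isCherry_le (H : SimpleGraph (Fin n)) :
    ∑ b ∈ (univ : Finset (Fin n)).offDiag, #{x ∈ (univ : Finset (Fin n)).offDiag | IsCherry H x b}
      ≤ 2 * n * H.edgeSet.ncard := by
  calc _ ≤ ∑ b : Fin n × Fin n, H.degree b.2 :=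
        (sum_le_sum fun b _ => card_filter_isCherry_le_degree H _ b).trans
          (sum_le_sum_of_subset (subset_univ _))
    _ = n * (2 * #H.edgeFinset) := by
        simp only [Fintype.sum_prod_type, SimpleGraph.sum_degrees_eq_twice_card_edges, sum_const,
          card_univ, Fintype.card_fin, smul_eq_mul]
    _ = 2 * n * H.edgeSet.ncard := by
        rw [← Set.ncard_coe_finset, SimpleGraph.coe_edgeFinset]; ring

lemma bernoulliSum_exp_cappedCount_isCherry_le (H : SimpleGraph (Fin n)) {p lam K : ℝ}
    (hp0 : 0 ≤ p) (hp1 : p ≤ 1) (hlam : 0 ≤ lam) (hK : 0 ≤ K)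
    (hsmall : lam * (2 * p * n + K) ≤ 1 / 2) :
    bernoulliSum p (univ : Finset (Fin n)).offDiag
        (fun D => exp (lam * cappedCount (IsCherry H) 0 K D))
      ≤ exp (lam * (8 * p ^ 2 * n * H.edgeSet.ncard)) := by
  have hdeg : ∀ b : Fin n × Fin n,
      #{x ∈ (univ : Finset (Fin n)).offDiag | IsCherry H x b} ≤ n := fun b =>
    (card_filter_isCherry_le_degree H _ b).trans
      ((H.degree_lt_card_verts b.2).le.trans_eq (Fintype.card_fin n))
  refine (bernoulliSum_exp_cappedCount_le (fun a => a.2) (fun a b h => h.2.1) hp0 hp1 hlam hK _ 0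
    (fun _ => le_rfl) fun b _ => ?_).trans ?_
  · refine le_trans ?_ hsmall
    rw [Pi.zero_apply, zero_add]
    gcongr
    exact_mod_cast hdeg b
  · have hsum := (Nat.cast_le (α := ℝ)).2 (sum_card_filter_isCherry_le H)
    push_cast at hsum
    gcongr
    calc ∑ b ∈ (univ : Finset (Fin n)).offDiag,
          2 * p * ((0 : Fin n × Fin n → ℝ) b
            + 2 * p * #{x ∈ (univ : Finset (Fin n)).offDiag | IsCherry H x b})
        = 4 * p ^ 2 * ∑ b ∈ (univ : Finset (Fin n)).offDiag,
            (#{x ∈ (univ : Finset (Fin n)).offDiag | IsCherry H x b} : ℝ) := by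
          rw [mul_sum]
          exact sum_congr rfl fun b _ => by rw [Pi.zero_apply]; ring
      _ ≤ 4 * p ^ 2 * (2 * n * H.edgeSet.ncard) := by gcongr
      _ = 8 * p ^ 2 * n * H.edgeSet.ncard := by ring

end Cherries

open Classical in
/-- There exist γ', ε' > 0 such that for all sufficiently large m, n: if H is
a bipartite graph on [n] with m edges and D ~ 𝔾⃗(n,p) with p ≤ ε' n^{-1/2}, then
P(e(H ∩ D̂) ≥ m/16 ∧ Δ(D) ≤ 5pn − 1) ≤ exp(−γ' m n^{-1/2}). The probability is written
as an explicit sum over all digraphs D (subsets of the off-diagonal ordered pairs),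
weighted by p^{|D|}(1-p)^{n(n-1)-|D|}; Δ(D) is the maximum out-degree. -/
theorem stmt4 :
    ∃ γ' ε' : ℝ, 0 < γ' ∧ 0 < ε' ∧ ∃ N : ℕ, ∀ m n : ℕ, N ≤ m → N ≤ n →
      ∀ H : SimpleGraph (Fin n), H.Colorable 2 → H.edgeSet.ncard = m →
        ∀ p : ℝ, 0 ≤ p → p ≤ ε' / Real.sqrt n →
          (∑ D ∈ (Finset.univ : Finset (Fin n)).offDiag.powerset,
              if ((m : ℝ) / 16 ≤ (((H ⊓ hatGraph D).edgeSet.ncard : ℕ) : ℝ) ∧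
                  ∀ v : Fin n, (((D.filter (fun e => e.1 = v)).card : ℕ) : ℝ) ≤ 5 * p * n - 1)
              then p ^ D.card * (1 - p) ^ (n * (n - 1) - D.card) else 0) ≤
            Real.exp (-γ' * (m : ℝ) / Real.sqrt n) := by
  refine ⟨1 / 128, 1 / 16, by norm_num, by norm_num, 1, fun m n _ hn H _ hHm p hp0 hpε => ?_⟩
  have hs : 1 ≤ √(n : ℝ) := Real.one_le_sqrt.2 (by exact_mod_cast hn)
  have hsq : √(n : ℝ) ^ 2 = n := Real.sq_sqrt n.cast_nonneg
  obtain ⟨q, hq_def⟩ : ∃ q, q = p * √(n : ℝ) := ⟨_, rfl⟩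
  have hq : q ≤ 1 / 16 := hq_def ▸ (le_div_iff₀ (by linarith)).1 hpε
  have hq2 : q ^ 2 ≤ 1 / 256 := by nlinarith [show 0 ≤ q by rw [hq_def]; positivity]
  have hp1 : p ≤ 1 := by nlinarith
  have hpn : p * n = q * √(n : ℝ) := by rw [hq_def, mul_assoc, ← sq, hsq]
  have hp2n : p ^ 2 * n = q ^ 2 := by rw [hq_def, mul_pow, hsq]
  obtain ⟨lam, hlam_def⟩ : ∃ lam, lam = 1 / (4 * √(n : ℝ)) := ⟨_, rfl⟩
  have hlam : 0 ≤ lam := by rw [hlam_def]; positivity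
  have hlams : lam * √(n : ℝ) = 1 / 4 := by rw [hlam_def]; field_simp
  have hcard : n * (n - 1) = #(univ : Finset (Fin n)).offDiag := by
    rw [offDiag_card, card_univ, Fintype.card_fin, Nat.mul_sub_one]
  rw [hcard]
  calc _ ≤ exp (-(lam * (m / 16))) * bernoulliSum p (univ : Finset (Fin n)).offDiag
          (fun D => exp (lam * cappedCount (IsCherry H) 0 (5 * p * n) D)) :=
        sum_ite_le_exp_mul_bernoulliSum hp0 hp1 hlam _ _ fun D _ hD =>
          hD.1.trans (ncard_edgeSet_inf_hatGraph_le_cappedCount H D fun v => by linarith [hD.2 v])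
    _ ≤ exp (-(lam * (m / 16))) * exp (lam * (8 * p ^ 2 * n * m)) := by
        gcongr
        rw [← hHm]
        refine bernoulliSum_exp_cappedCount_isCherry_le H hp0 hp1 hlam (by positivity) ?_
        linear_combination (7 * lam) * hpn + 7 * q * hlams + 7 / 4 * hq
    _ ≤ exp (-(1 / 128) * m / √(n : ℝ)) := by
        have hrhs : -(1 / 128) * (m : ℝ) / √(n : ℝ) = -(lam * m / 32) := by
          rw [hlam_def]
          field_simp
          ring
        rw [← exp_add, hrhs, mul_assoc 8, hp2n]
        gcongr
        nlinarith [mul_le_mul_of_nonneg_left hq2 (by positivity : 0 ≤ lam * m)]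
end

section
/- There exists a universal constant C > 0 such that for all sufficiently large n the following holds with p = C·√(log n / n): there exists a collection 𝒢 of graphs on [n] such that every triangle-free graph on [n] is a subgraph of some member of 𝒢 and Σ_{G∈𝒢} (1−p)^{C(n,2) − e(G)} ≤ 1/2. In other words, the expectation-threshold of the down-set of triangle-free graphs on [n] is O(√(log n / n)). -/
/-!
A triangle-free graph on `n` vertices has an independent set `A` of size `t ≈ √(n log n) / 128`,
so it is a subgraph of the complete graph minus the clique on `A`. These `C(n, t) ≤ n ^ t` graphs
each miss `C(t, 2)` edges, and `n ^ t (1 - p) ^ C(t, 2) ≤ exp (t log n - p C(t, 2)) ≤ 1 / 2`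
once `p = 1024 √(log n / n)`.

For the independence number `α`, with `Δ` the maximum degree: `Δ ≤ α` since neighbourhoods are
independent, `n ≤ α (Δ + 1)` since a maximum independent set dominates, and
`n log Δ ≤ 32 Δ α` by averaging over a uniformly random independent set `I` (the occupancy
method). For each vertex `v`, condition on `J = I \ N[v]`: then `I` is `J ∪ {v}` or `J ∪ S` for
any `S` among the `k` neighbours of `v` with no neighbour in `J` (`N(v)` is independent), and
`(2 ^ k + 1) log Δ / 16 ≤ k 2 ^ (k - 1) + Δ` bounds the mean of `|I ∩ N(v)| + Δ [v ∈ I]`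
from below. Summed over `v`, that quantity is at most `2 Δ |I| ≤ 2 Δ α`. One of the three
bounds gives `α ≥ √(n log n) / 128`.
-/

open Finset SimpleGraph Real

theorem Finset.sum_card_powerset {α : Type*} (s : Finset α) :
    ∑ t ∈ s.powerset, #t = #s * 2 ^ (#s - 1) := by
  rw [sum_powerset_apply_card (fun m ↦ m), ← Nat.sum_range_mul_choose]
  simp [mul_comm]

theorem two_pow_add_one_mul_log_div_le (k : ℕ) {D : ℝ} (hD : 0 ≤ D) :
    (2 ^ k + 1 : ℝ) * (log D / 16) ≤ k * 2 ^ (k - 1) + D := by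
  rcases le_or_gt D 1 with hD1 | hD1
  · have : log D ≤ 0 := log_nonpos hD hD1
    nlinarith [pow_pos (two_pos (α := ℝ)) k, pow_pos (two_pos (α := ℝ)) (k - 1)]
  have hlogD : 0 ≤ log D := log_nonneg hD1.le
  rcases le_or_gt D (4 ^ k) with hsmall | hlarge
  · have hlog : log D ≤ 2 * k := calc
      log D ≤ log (4 ^ k) := log_le_log (by linarith) hsmall
      _ = k * (2 * log 2) := by
        rw [log_pow, show (4 : ℝ) = 2 ^ 2 by norm_num, log_pow]; push_cast; ring
      _ ≤ 2 * k := by nlinarith [log_two_lt_d9]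
    have hk : 1 ≤ k := by
      by_contra! hk
      simp only [Nat.lt_one_iff.1 hk, pow_zero] at hsmall
      linarith
    have h2k : (2 : ℝ) ^ k = 2 * 2 ^ (k - 1) := by rw [← pow_succ', Nat.sub_add_cancel hk]
    have : (1 : ℝ) ≤ 2 ^ (k - 1) := one_le_pow₀ one_le_two
    have : (1 : ℝ) ≤ k := by exact_mod_cast hk
    nlinarith
  · have hsqrt : (2 : ℝ) ^ k ≤ √D := by
      rw [le_sqrt (by positivity) hD, ← pow_mul, pow_mul']
      norm_num
      exact hlarge.le
    have hlog : log D ≤ 2 * √D := by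
      have := log_le_sub_one_of_pos (sqrt_pos.2 (by linarith : 0 < D))
      rw [log_sqrt hD] at this
      linarith
    have : (1 : ℝ) ≤ 2 ^ k := one_le_pow₀ one_le_two
    nlinarith [mul_self_sqrt hD, sq_nonneg (√D), pow_pos (two_pos (α := ℝ)) (k - 1)]

theorem sqrt_mul_log_div_le_of_indep_bounds {n Δ α : ℝ} (hn : 0 ≤ n) (hΔ : 0 ≤ Δ)
    (hgreedy : n ≤ α * (Δ + 1)) (hΔα : Δ ≤ α) (hocc : n * log Δ ≤ 32 * Δ * α) :
    √(n * log n) / 128 ≤ α := by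
  set y := log n
  rcases le_or_gt y 0 with hy | hy
  · rw [sqrt_eq_zero'.2 (mul_nonpos_of_nonneg_of_nonpos hn hy)]
    linarith
  have hn : 0 < n := hn.lt_of_ne (by rintro rfl; simp [y] at hy)
  set r := √(n / y)
  have hr : r * r = n / y := mul_self_sqrt (by positivity)
  have hs : √(n * y) = r * y := by
    rw [show n * y = n / y * y ^ 2 by field_simp, sqrt_mul (by positivity), sqrt_sq hy.le]
  have hr1 : 1 ≤ r := one_le_sqrt.2 ((one_le_div hy).2 (by linarith [log_le_sub_one_of_pos hn]))
  rw [hs]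
  have hn' : n = r * r * y := by rw [hr]; field_simp
  rcases lt_or_ge Δ r with hΔr | hΔr
  · have : r * (r * y) ≤ r * (2 * α) := by nlinarith
    linarith [le_of_mul_le_mul_left this (by linarith : 0 < r)]
  rcases le_or_gt (r * y) Δ with hΔ' | hΔ'
  · linarith
  · have hlogy : log y ≤ y / 2 := by
      have := log_le_sub_one_of_pos (sqrt_pos.2 hy)
      rw [log_sqrt hy.le] at this
      nlinarith [sq_nonneg (√y - 2), sq_sqrt hy.le]
    have hlogΔ : y / 4 ≤ log Δ := calc
      y / 4 ≤ (y - log y) / 2 := by linarith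
      _ = log r := by rw [log_sqrt (by positivity), log_div hn.ne' hy.ne']
      _ ≤ log Δ := log_le_log (by linarith) hΔr
    have : r * y * (r * y) ≤ r * y * (128 * α) := by nlinarith
    linarith [le_of_mul_le_mul_left this (by positivity)]

namespace SimpleGraph

variable {V : Type*}

def cliqueCompl (A : Finset V) : SimpleGraph V := fromEdgeSet (↑A.sym2)ᶜ

theorem IsIndepSet.le_cliqueCompl {G : SimpleGraph V} {A : Finset V} (h : G.IsIndepSet ↑A) :
    G ≤ cliqueCompl A := fun a b hab ↦ by
  simp only [cliqueCompl, fromEdgeSet_adj, Set.mem_compl_iff, mem_coe, mem_sym2_iff, Sym2.mem_iff]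
  exact ⟨fun hA ↦ h (hA a (.inl rfl)) (hA b (.inr rfl)) hab.ne hab, hab.ne⟩

theorem choose_two_sub_ncard_edgeSet_cliqueCompl [Fintype V] (A : Finset V) :
    (Fintype.card V).choose 2 - (cliqueCompl A).edgeSet.ncard = (#A).choose 2 := by
  classical
  have hK : #{e ∈ A.sym2 | ¬e.IsDiag} = (#A).choose 2 := by
    rw [sym2_eq_image, Sym2.filter_image_mk_not_isDiag, Sym2.card_image_offDiag]
  set K := {e ∈ A.sym2 | ¬e.IsDiag}
  have hKdiag : (↑K : Set (Sym2 V)) ⊆ Sym2.diagSetᶜ := fun e he ↦ (mem_filter.1 he).2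
  have hE : (cliqueCompl A).edgeSet = Sym2.diagSetᶜ \ ↑K := by
    ext e
    simp only [cliqueCompl, edgeSet_fromEdgeSet, K, coe_filter, Set.mem_sdiff, Set.mem_compl_iff,
      Sym2.mem_diagSet, Set.mem_ofPred_eq, mem_coe]
    tauto
  rw [hE, Set.ncard_sdiff hKdiag, Sym2.ncard_diagSet_compl, Nat.card_eq_fintype_card,
    Set.ncard_coe_finset, Nat.sub_sub_self (hK ▸ Nat.choose_le_choose 2 (card_le_univ A)), hK]

theorem sum_image_cliqueCompl_le [Fintype V] [DecidableEq (SimpleGraph V)] (t : ℕ) {q : ℝ}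
    (hq : 0 ≤ q) :
    ∑ G ∈ ((univ : Finset V).powersetCard t).image cliqueCompl,
        q ^ ((Fintype.card V).choose 2 - G.edgeSet.ncard) ≤
      (Fintype.card V).choose t * q ^ t.choose 2 := calc
  _ ≤ ∑ A ∈ (univ : Finset V).powersetCard t,
        q ^ ((Fintype.card V).choose 2 - (cliqueCompl A).edgeSet.ncard) :=
    sum_image_le_of_nonneg
      (f := fun G : SimpleGraph V ↦ q ^ ((Fintype.card V).choose 2 - G.edgeSet.ncard))
      fun _ _ ↦ pow_nonneg hq _
  _ = ∑ A ∈ (univ : Finset V).powersetCard t, q ^ t.choose 2 := sum_congr rfl fun A hA ↦ by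
    rw [choose_two_sub_ncard_edgeSet_cliqueCompl, (mem_powersetCard.1 hA).2]
  _ = (Fintype.card V).choose t * q ^ t.choose 2 := by
    rw [sum_const, card_powersetCard, card_univ, nsmul_eq_mul]

theorem exists_isNIndepSet_of_le_indepNum {G : SimpleGraph V} {t : ℕ} (ht : t ≤ G.indepNum) :
    ∃ A, G.IsNIndepSet t A := by
  obtain ⟨s, hs⟩ := G.exists_isNIndepSet_indepNum
  obtain ⟨A, hAs, hA⟩ := exists_subset_card_eq (hs.card_eq ▸ ht)
  exact ⟨A, Set.Pairwise.mono (coe_subset.2 hAs) hs.isIndepSet, hA⟩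

section Finite

variable [Fintype V] {G : SimpleGraph V} [DecidableRel G.Adj]

theorem maxDegree_le_indepNum (h : G.CliqueFree 3) : G.maxDegree ≤ G.indepNum :=
  maxDegree_le_of_forall_degree_le _ _ fun v ↦ by
    rw [← card_neighborFinset_eq_degree]
    exact IsIndepSet.card_le_indepNum (by simpa using isIndepSet_neighborSet_of_triangleFree G h v)

variable [DecidableEq V]

theorem card_le_indepNum_mul_maxDegree_add_one :
    Fintype.card V ≤ G.indepNum * (G.maxDegree + 1) := by
  obtain ⟨s, hs⟩ := G.maximumIndepSet_exists
  have hcover : (univ : Finset V) ⊆ s.biUnion fun u ↦ insert u (G.neighborFinset u) := by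
    intro v _
    simp only [mem_biUnion, mem_insert, mem_neighborFinset]
    by_contra! hv
    have hvs : v ∉ s := fun hvs ↦ (hv v hvs).1 rfl
    have hins : G.IsIndepSet ↑(insert v s) := by
      rw [coe_insert]
      exact hs.isIndepSet.insert fun u hu _ ↦ ⟨fun h ↦ (hv u hu).2 h.symm, (hv u hu).2⟩
    have := hs.maximum _ hins
    rw [card_insert_of_notMem hvs] at this
    omega
  calc Fintype.card V = #(univ : Finset V) := card_univ.symm
    _ ≤ ∑ u ∈ s, #(insert u (G.neighborFinset u)) :=
      (card_le_card hcover).trans card_biUnion_le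
    _ ≤ ∑ _u ∈ s, (G.maxDegree + 1) := sum_le_sum fun u _ ↦
      (card_insert_le _ _).trans (by simpa using G.degree_le_maxDegree u)
    _ = G.indepNum * (G.maxDegree + 1) := by
      rw [sum_const, smul_eq_mul, maximumIndepSet_card_eq_indepNum s hs]

variable (G)

def indepFinsets : Finset (Finset V) := {I | G.IsIndepSet ↑I}

def nbhdWeight (v : V) (I : Finset V) : ℕ :=
  #{u ∈ I | G.Adj v u} + if v ∈ I then G.maxDegree else 0

def freeNbrs (v : V) (J : Finset V) : Finset V :=
  {u ∈ G.neighborFinset v | ∀ w ∈ J, ¬G.Adj u w}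

variable {G}

theorem sum_nbhdWeight_le (I : Finset V) : ∑ v, G.nbhdWeight v I ≤ 2 * G.maxDegree * #I := by
  have hdeg : ∑ v, #{u ∈ I | G.Adj v u} = ∑ u ∈ I, #{v | G.Adj v u} :=
    sum_card_bipartiteAbove_eq_sum_card_bipartiteBelow G.Adj
  have hle : ∑ u ∈ I, #{v | G.Adj v u} ≤ #I * G.maxDegree := by
    refine sum_le_card_nsmul _ _ _ fun u _ ↦ (le_of_eq ?_).trans (G.degree_le_maxDegree u)
    simp only [← card_neighborFinset_eq_degree, neighborFinset_eq_filter, adj_comm]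
  simp only [nbhdWeight, sum_add_distrib, hdeg, sum_ite_mem, univ_inter, sum_const, smul_eq_mul]
  linarith

theorem filter_sdiff_eq_insert_image (h : G.CliqueFree 3) {v : V} {J : Finset V}
    (hJ : G.IsIndepSet ↑J) (hJv : Disjoint J (insert v (G.neighborFinset v))) :
    {I ∈ G.indepFinsets | I \ insert v (G.neighborFinset v) = J} =
      insert (insert v J) ((G.freeNbrs v J).powerset.image (J ∪ ·)) := by
  have hN : G.IsIndepSet (G.neighborSet v) := isIndepSet_neighborSet_of_triangleFree G h v
  have hJv : ∀ u ∈ J, u ≠ v ∧ ¬G.Adj v u := fun u hu ↦ by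
    simpa using Finset.disjoint_left.1 hJv hu
  ext I
  simp only [indepFinsets, freeNbrs, mem_filter, mem_univ, true_and, mem_insert, mem_image,
    mem_powerset]
  constructor
  · rintro ⟨hI, rfl⟩
    by_cases hv : v ∈ I
    · left
      have : ∀ u ∈ I, ¬ G.Adj v u := fun u hu huv ↦ hI hv hu huv.ne huv
      ext x
      simp only [mem_insert, mem_sdiff, mem_neighborFinset]
      grind
    · right
      refine ⟨I ∩ G.neighborFinset v, fun u hu ↦ ?_, ?_⟩
      · simp only [mem_inter, mem_filter, mem_sdiff] at hu ⊢
        exact ⟨hu.2, fun w hw huw ↦ hI hu.1 hw.1 huw.ne huw⟩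
      · ext x
        simp only [mem_union, mem_sdiff, mem_inter, mem_insert]
        grind
  · rintro (rfl | ⟨S, hS, rfl⟩)
    · refine ⟨?_, ?_⟩
      · simp only [coe_insert, IsIndepSet, Set.pairwise_insert, mem_coe]
        grind [adj_comm]
      · ext x
        simp only [mem_sdiff, mem_insert, mem_neighborFinset]
        grind
    · simp only [subset_iff, mem_filter, mem_neighborFinset] at hS
      refine ⟨?_, ?_⟩
      · simp only [coe_union, IsIndepSet, Set.pairwise_union, mem_coe]
        grind [adj_comm, Set.Pairwise, mem_neighborSet]
      · ext x
        simp only [mem_sdiff, mem_insert, mem_neighborFinset, mem_union]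
        grind

theorem card_filter_mul_log_maxDegree_le_sum_nbhdWeight (h : G.CliqueFree 3) {v : V}
    {J : Finset V} (hJ : G.IsIndepSet ↑J) (hJv : Disjoint J (insert v (G.neighborFinset v))) :
    (#{I ∈ G.indepFinsets | I \ insert v (G.neighborFinset v) = J} : ℝ) *
        (log G.maxDegree / 16) ≤
      ∑ I ∈ G.indepFinsets with I \ insert v (G.neighborFinset v) = J,
        (G.nbhdWeight v I : ℝ) := by
  rw [filter_sdiff_eq_insert_image h hJ hJv]
  have hJv : ∀ u ∈ J, u ≠ v ∧ ¬G.Adj v u := fun u hu ↦ by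
    simpa using Finset.disjoint_left.1 hJv hu
  have hF : ∀ S ∈ (G.freeNbrs v J).powerset, ∀ u ∈ S, G.Adj v u := fun S hS u hu ↦ by
    simpa [freeNbrs] using (mem_filter.1 (mem_powerset.1 hS hu)).1
  have hvJS : ∀ S ∈ (G.freeNbrs v J).powerset, v ∉ J ∪ S := fun S hS hv ↦ by
    rcases mem_union.1 hv with hv | hv
    · exact (hJv v hv).1 rfl
    · exact G.irrefl (hF S hS v hv)
  have hdisj : ∀ S ∈ (G.freeNbrs v J).powerset, Disjoint J S := fun S hS ↦
    Finset.disjoint_left.2 fun u hJ hS' ↦ (hJv u hJ).2 (hF S hS u hS')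
  have hinj : Set.InjOn (J ∪ ·) (G.freeNbrs v J).powerset := fun S hS T hT hST ↦ by
    rw [← union_sdiff_cancel_left (hdisj S hS), ← union_sdiff_cancel_left (hdisj T hT)]
    exact congrArg (· \ J) hST
  have hnotMem : insert v J ∉ (G.freeNbrs v J).powerset.image (J ∪ ·) := by
    simp only [mem_image, not_exists, not_and]
    exact fun S hS hSv ↦ hvJS S hS (hSv ▸ mem_insert_self v J)
  have hweight_insert : G.nbhdWeight v (insert v J) = G.maxDegree := by
    have : {u ∈ insert v J | G.Adj v u} = ∅ := filter_eq_empty_iff.2 fun u hu ↦ by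
      rcases mem_insert.1 hu with rfl | hu
      exacts [G.irrefl, (hJv u hu).2]
    simp [nbhdWeight, this]
  have hweight_union : ∀ S ∈ (G.freeNbrs v J).powerset, G.nbhdWeight v (J ∪ S) = #S :=
    fun S hS ↦ by
      rw [nbhdWeight, if_neg (hvJS S hS), filter_union, filter_true_of_mem (hF S hS),
        filter_eq_empty_iff.2 fun u hu ↦ (hJv u hu).2, empty_union, add_zero]
  set k := #(G.freeNbrs v J)
  calc _ = (2 ^ k + 1 : ℝ) * (log G.maxDegree / 16) := by
        rw [card_insert_of_notMem hnotMem, card_image_of_injOn hinj, card_powerset]; push_cast; ring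
    _ ≤ k * 2 ^ (k - 1) + G.maxDegree := two_pow_add_one_mul_log_div_le k (Nat.cast_nonneg _)
    _ = _ := by
        rw [sum_insert hnotMem, sum_image hinj,
          sum_congr rfl fun S hS ↦ by rw [hweight_union S hS], hweight_insert, ← Nat.cast_sum,
          sum_card_powerset]
        push_cast; ring

theorem card_mul_log_maxDegree_le_sum_nbhdWeight (h : G.CliqueFree 3) (v : V) :
    (#G.indepFinsets : ℝ) * (log G.maxDegree / 16) ≤
      ∑ I ∈ G.indepFinsets, (G.nbhdWeight v I : ℝ) := by
  set Nv := insert v (G.neighborFinset v)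
  have hmaps : ∀ I ∈ G.indepFinsets, I \ Nv ∈ G.indepFinsets.image (· \ Nv) :=
    fun I hI ↦ mem_image_of_mem _ hI
  rw [card_eq_sum_card_fiberwise hmaps, ← sum_fiberwise_of_maps_to hmaps, Nat.cast_sum, sum_mul]
  refine sum_le_sum fun J hJ ↦ ?_
  obtain ⟨I₀, hI₀, rfl⟩ := mem_image.1 hJ
  have hJ : G.IsIndepSet ↑(I₀ \ Nv) :=
    Set.Pairwise.mono (coe_subset.2 sdiff_subset) (mem_filter.1 hI₀).2
  exact card_filter_mul_log_maxDegree_le_sum_nbhdWeight h hJ sdiff_disjoint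

theorem card_mul_log_maxDegree_le (h : G.CliqueFree 3) :
    (Fintype.card V : ℝ) * log G.maxDegree ≤ 32 * G.maxDegree * G.indepNum := by
  have hpos : (0 : ℝ) < #G.indepFinsets :=
    Nat.cast_pos.2 (card_pos.2 ⟨∅, by simp [indepFinsets]⟩)
  have hweight : ∀ I ∈ G.indepFinsets, (∑ v, G.nbhdWeight v I : ℝ) ≤
      2 * G.maxDegree * G.indepNum := fun I hI ↦ by
    have := (sum_nbhdWeight_le (G := G) I).trans
      (Nat.mul_le_mul_left _ ((mem_filter.1 hI).2.card_le_indepNum))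
    exact_mod_cast this
  have key : #G.indepFinsets * (Fintype.card V * (log G.maxDegree / 16)) ≤
      #G.indepFinsets * (2 * G.maxDegree * G.indepNum) := calc
    #G.indepFinsets * (Fintype.card V * (log G.maxDegree / 16))
        = ∑ _v : V, #G.indepFinsets * (log G.maxDegree / 16) := by
      rw [sum_const, card_univ, nsmul_eq_mul, mul_left_comm]
    _ ≤ ∑ v, ∑ I ∈ G.indepFinsets, (G.nbhdWeight v I : ℝ) :=
      sum_le_sum fun v _ ↦ card_mul_log_maxDegree_le_sum_nbhdWeight h v
    _ = ∑ I ∈ G.indepFinsets, ∑ v, (G.nbhdWeight v I : ℝ) := sum_comm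
    _ ≤ ∑ _I ∈ G.indepFinsets, (2 * G.maxDegree * G.indepNum : ℝ) := sum_le_sum hweight
    _ = #G.indepFinsets * (2 * G.maxDegree * G.indepNum) := by rw [sum_const, nsmul_eq_mul]
  linarith [le_of_mul_le_mul_left key hpos]

theorem sqrt_mul_log_div_le_indepNum (h : G.CliqueFree 3) :
    √(Fintype.card V * log (Fintype.card V)) / 128 ≤ G.indepNum :=
  sqrt_mul_log_div_le_of_indep_bounds (Nat.cast_nonneg _) (Nat.cast_nonneg _)
    (by exact_mod_cast G.card_le_indepNum_mul_maxDegree_add_one)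
    (by exact_mod_cast maxDegree_le_indepNum h) (card_mul_log_maxDegree_le h)

end Finite

end SimpleGraph

theorem choose_mul_one_sub_pow_choose_two_le_half {n t : ℕ} {p : ℝ} (hn : 0 < n) (hp : p ≤ 1)
    (h : t * log n + 1 ≤ p * t.choose 2) :
    (n.choose t : ℝ) * (1 - p) ^ t.choose 2 ≤ 1 / 2 := calc
  (n.choose t : ℝ) * (1 - p) ^ t.choose 2 ≤ (n : ℝ) ^ t * exp (-p) ^ t.choose 2 := by
    gcongr
    · exact_mod_cast Nat.choose_le_pow n t
    · exact one_sub_le_exp_neg p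
  _ = exp (t * log n - p * t.choose 2) := by
    rw [← exp_log (Nat.cast_pos.2 hn : (0 : ℝ) < n), ← exp_nat_mul, ← exp_nat_mul,
      ← exp_add, log_exp]
    ring_nf
  _ ≤ exp (-1) := exp_le_exp.2 (by linarith)
  _ ≤ 1 / 2 := exp_neg_one_lt_half.le

theorem mul_sqrt_div_le_one {c n y : ℝ} (hc : 0 ≤ c) (hy : 0 ≤ y) (h : c ^ 2 * y ≤ n) :
    c * √(y / n) ≤ 1 := calc
  c * √(y / n) = √(c ^ 2 * (y / n)) := by rw [sqrt_mul (by positivity), sqrt_sq hc]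
  _ ≤ 1 := sqrt_le_one.2 (by
    rw [mul_div_assoc']; exact div_le_one_of_le₀ h ((mul_nonneg (sq_nonneg c) hy).trans h))

theorem mul_add_one_le_mul_choose_two {n y : ℝ} {t : ℕ} (hy : 1 ≤ y) (h : 1024 ^ 2 * y ≤ n)
    (ht : √(n * y) / 128 ≤ t) : t * y + 1 ≤ 1024 * √(y / n) * t.choose 2 := by
  have hn : 0 < n := by linarith
  set s := √(n * y)
  set q := √(y / n)
  have hqs : q * s = y := by
    rw [← sqrt_mul (by positivity), show y / n * (n * y) = y ^ 2 by field_simp,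
      sqrt_sq (by linarith)]
  have hs : 1024 ≤ s := le_sqrt_of_sq_le (by nlinarith)
  rw [Nat.cast_choose_two]
  calc t * y + 1 ≤ 2 * t * y := by nlinarith
    _ = 512 * q * t * (s / 256) := by rw [← hqs]; ring
    _ ≤ 512 * q * t * (t - 1) := mul_le_mul_of_nonneg_left (by linarith) (by positivity)
    _ = 1024 * q * (t * (t - 1) / 2) := by ring

theorem eventually_one_le_log_and_mul_log_le (c : ℝ) :
    ∀ᶠ x : ℝ in Filter.atTop, 1 ≤ log x ∧ c * log x ≤ x := by
  filter_upwards [tendsto_log_atTop.eventually_ge_atTop 1,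
    isLittleO_log_id_atTop.def (by positivity : (0 : ℝ) < 1 / (|c| + 1)),
    Filter.eventually_ge_atTop 0]
    with x hlog hsmall hx
  rw [norm_of_nonneg (by linarith), id, norm_of_nonneg hx, div_mul_eq_mul_div, one_mul,
    le_div_iff₀ (by positivity)] at hsmall
  exact ⟨hlog, by nlinarith [le_abs_self c]⟩

/-- There exists C > 0 such that for all sufficiently large n, with
p = C·√(log n / n), there is a collection 𝒢 of graphs on [n] such that every
triangle-free graph on [n] is a subgraph of some member of 𝒢 and
Σ_{G∈𝒢} (1−p)^{C(n,2) − e(G)} ≤ 1/2: the expectation-threshold of the down-set of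
triangle-free graphs is O(√(log n / n)). -/
theorem stmt10 :
    ∃ C : ℝ, 0 < C ∧ ∃ N : ℕ, ∀ n : ℕ, N ≤ n →
      ∃ 𝓖 : Finset (SimpleGraph (Fin n)),
        (∀ T : SimpleGraph (Fin n), T.CliqueFree 3 → ∃ G ∈ 𝓖, T ≤ G) ∧
        ∑ G ∈ 𝓖, (1 - C * Real.sqrt (Real.log n / n)) ^ (n.choose 2 - G.edgeSet.ncard) ≤
          1 / 2 := by
  obtain ⟨N, hN⟩ := Filter.eventually_atTop.1
    (tendsto_natCast_atTop_atTop.eventually (eventually_one_le_log_and_mul_log_le (1024 ^ 2)))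
  refine ⟨1024, by norm_num, N, fun n hn ↦ ?_⟩
  obtain ⟨hlog, hbig⟩ := hN n hn
  have hn0 : 0 < n := by exact_mod_cast (show (0 : ℝ) < n by linarith)
  set t := ⌈√(n * log n) / 128⌉₊
  set p := 1024 * √(log n / n)
  have hp : p ≤ 1 := mul_sqrt_div_le_one (by norm_num) (by linarith) hbig
  classical
  refine ⟨(univ.powersetCard t).image cliqueCompl, fun T hT ↦ ?_, ?_⟩
  · obtain ⟨A, hA⟩ := T.exists_isNIndepSet_of_le_indepNum (t := t)
      (Nat.ceil_le.2 (by simpa using T.sqrt_mul_log_div_le_indepNum hT))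
    exact ⟨cliqueCompl A, mem_image_of_mem _ (mem_powersetCard.2 ⟨subset_univ A, hA.card_eq⟩),
      hA.isIndepSet.le_cliqueCompl⟩
  · calc _ ≤ (n.choose t : ℝ) * (1 - p) ^ t.choose 2 := by
          simpa only [Fintype.card_fin] using sum_image_cliqueCompl_le (V := Fin n) t (q := 1 - p)
            (by linarith)
      _ ≤ 1 / 2 := choose_mul_one_sub_pow_choose_two_le_half hn0 hp
          (mul_add_one_le_mul_choose_two hlog hbig (Nat.le_ceil _))
end

section
/- There exists a universal constant C > 0 such that for all sufficiently large n there exists a triangle-free graph G on [n] = {1,…,n} with no independent set of size ⌈C·√n·log n⌉. Equivalently, the Ramsey number satisfies r(3,k) = Ω(k²/log² k). -/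
/-!
Delete from the binomial random graph `G(n, p)`, `p = 1 / (30 √n)`, every edge of a maximum
family of edge-disjoint triangles; by maximality what remains is triangle-free. Let
`k ≈ 750 √n log n` and `j ≈ k log n`. If a `k`-set `S` is independent after the deletion, then
either `G(n, p)` has fewer than `3 j` edges inside `S`, which has probability at most
`2 ^ (3 j) (1 - p / 2) ^ C(k, 2)`, or these edges are covered by `j` edge-disjoint triangles
with two vertices in `S`, which has probability at most `C(C(k, 2) n, j) p ^ (3 j)`. Both are
at most `e⁻¹ / C(n, k)`, so the union bound over all `S` leaves an outcome with no independent
`k`-set.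
-/

open Finset Real

namespace TriangleFreeRamsey

section BernoulliWeight

variable {α R : Type*} [DecidableEq α]

/-- The probability that the `p`-random subset of `M` is `A`. -/
def bernoulliWeight [CommRing R] (p : R) (M A : Finset α) : R := p ^ #A * (1 - p) ^ #(M \ A)

theorem sum_pow_card_inter_mul_bernoulliWeight [CommRing R] (p a b : R) {M E : Finset α}
    (hEM : E ⊆ M) :
    ∑ A ∈ M.powerset, a ^ #(A ∩ E) * b ^ #(E \ A) * bernoulliWeight p M A
      = (a * p + b * (1 - p)) ^ #E := by
  have key := prod_add (fun x ↦ (if x ∈ E then a else 1) * p)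
    (fun x ↦ (if x ∈ E then b else 1) * (1 - p)) M
  have hfactor : ∀ x, (if x ∈ E then a else 1) * p + (if x ∈ E then b else 1) * (1 - p)
      = if x ∈ E then a * p + b * (1 - p) else 1 := fun x ↦ by split_ifs <;> ring
  simp only [hfactor, prod_ite_mem, prod_mul_distrib, prod_const, inter_eq_right.2 hEM] at key
  rw [key]
  refine sum_congr rfl fun A hA ↦ ?_
  have hdiff : (M \ A) ∩ E = E \ A := by
    rw [sdiff_inter_right_comm, inter_eq_right.2 hEM]
  rw [hdiff, bernoulliWeight]
  ring

theorem bernoulliWeight_nonneg [CommRing R] [PartialOrder R] [IsOrderedRing R] {p : R}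
    (hp0 : 0 ≤ p) (hp1 : p ≤ 1) (M A : Finset α) : 0 ≤ bernoulliWeight p M A :=
  mul_nonneg (pow_nonneg hp0 _) (pow_nonneg (sub_nonneg.2 hp1) _)

theorem sum_bernoulliWeight [CommRing R] (p : R) (M : Finset α) :
    ∑ A ∈ M.powerset, bernoulliWeight p M A = 1 := by
  simpa using sum_pow_card_inter_mul_bernoulliWeight p 1 1 (empty_subset M)

theorem sum_bernoulliWeight_superset [CommRing R] (p : R) {M E : Finset α} (hEM : E ⊆ M) :
    ∑ A ∈ M.powerset with E ⊆ A, bernoulliWeight p M A = p ^ #E := by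
  have h := sum_pow_card_inter_mul_bernoulliWeight p 1 0 hEM
  simp only [one_pow, one_mul, zero_mul, add_zero, zero_pow_eq, card_eq_zero,
    sdiff_eq_empty_iff_subset, ite_mul, zero_mul] at h
  rwa [sum_filter]

theorem sum_bernoulliWeight_card_inter_lt_le [Field R] [LinearOrder R] [IsStrictOrderedRing R]
    {p : R} (hp0 : 0 ≤ p) (hp1 : p ≤ 1) {M E : Finset α} (hEM : E ⊆ M) (m : ℕ) :
    ∑ A ∈ M.powerset with #(A ∩ E) < m, bernoulliWeight p M A
      ≤ 2 ^ m * (1 - p / 2) ^ #E := by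
  have h := sum_pow_card_inter_mul_bernoulliWeight p (1 / 2) 1 hEM
  simp only [one_pow, mul_one, one_mul] at h
  calc ∑ A ∈ M.powerset with #(A ∩ E) < m, bernoulliWeight p M A
      ≤ ∑ A ∈ M.powerset with #(A ∩ E) < m,
          2 ^ m * ((1 / 2) ^ #(A ∩ E) * bernoulliWeight p M A) := by
        refine sum_le_sum fun A hA ↦ ?_
        have hlt := (mem_filter.1 hA).2
        have : (1 : R) ≤ 2 ^ m * (1 / 2) ^ #(A ∩ E) := by
          rw [one_div_pow, ← div_eq_mul_one_div, one_le_div (by positivity)]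
          exact pow_le_pow_right₀ one_le_two hlt.le
        nlinarith [bernoulliWeight_nonneg hp0 hp1 M A]
    _ ≤ 2 ^ m * ∑ A ∈ M.powerset, (1 / 2) ^ #(A ∩ E) * bernoulliWeight p M A := by
        rw [← mul_sum]
        gcongr
        · exact fun A _ _ ↦ mul_nonneg (by positivity) (bernoulliWeight_nonneg hp0 hp1 M A)
        · exact filter_subset _ _
    _ = 2 ^ m * (1 - p / 2) ^ #E := by
        rw [h]; ring

end BernoulliWeight

theorem sum_filter_exists_le {ι β R : Type*} [AddCommMonoid R] [PartialOrder R]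
    [IsOrderedAddMonoid R] {s : Finset ι} {P : Finset β} {Q : ι → β → Prop}
    [∀ i b, Decidable (Q i b)] {w : β → R} (hw : ∀ b ∈ P, 0 ≤ w b) :
    ∑ b ∈ P with ∃ i ∈ s, Q i b, w b ≤ ∑ i ∈ s, ∑ b ∈ P with Q i b, w b := by
  classical
  calc ∑ b ∈ P with ∃ i ∈ s, Q i b, w b
      ≤ ∑ b ∈ P with ∃ i ∈ s, Q i b, ∑ i ∈ s with Q i b, w b := by
        refine sum_le_sum fun b hb ↦ ?_
        obtain ⟨hbP, i, hi, hQ⟩ := mem_filter.1 hb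
        exact single_le_sum (f := fun _ ↦ w b) (fun _ _ ↦ hw b hbP) (mem_filter.2 ⟨hi, hQ⟩)
    _ ≤ ∑ b ∈ P, ∑ i ∈ s with Q i b, w b :=
        sum_le_sum_of_subset_of_nonneg (filter_subset _ _)
          fun b hb _ ↦ sum_nonneg fun _ _ ↦ hw b hb
    _ = ∑ i ∈ s, ∑ b ∈ P with Q i b, w b := by
        simp only [sum_filter]
        exact sum_comm

theorem sum_filter_le_sum_filter_add_sum_filter {β R : Type*} [AddCommMonoid R] [PartialOrder R]
    [IsOrderedAddMonoid R] {P : Finset β} {r q q' : β → Prop} [DecidablePred r]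
    [DecidablePred q] [DecidablePred q'] {w : β → R} (hw : ∀ b ∈ P, 0 ≤ w b)
    (h : ∀ b ∈ P, r b → q b ∨ q' b) :
    ∑ b ∈ P with r b, w b ≤ ∑ b ∈ P with q b, w b + ∑ b ∈ P with q' b, w b := by
  simp only [sum_filter, ← sum_add_distrib]
  refine sum_le_sum fun b hb ↦ ?_
  have := hw b hb
  have := h b hb
  split_ifs <;> simp_all [add_nonneg, le_add_of_nonneg_right]

section Graph

variable {V : Type*}

/- Edge sets are finsets of two-element sets; the edges of the triangle `T` are
`T.powersetCard 2`. -/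
def IsTrianglePacking (A F : Finset (Finset V)) : Prop :=
  (∀ T ∈ F, #T = 3 ∧ T.powersetCard 2 ⊆ A) ∧
    (F : Set (Finset V)).PairwiseDisjoint (powersetCard 2)

theorem IsTrianglePacking.mono {A F F' : Finset (Finset V)} (hF : IsTrianglePacking A F)
    (h : F' ⊆ F) : IsTrianglePacking A F' :=
  ⟨fun T hT ↦ hF.1 T (h hT), hF.2.subset (coe_subset.2 h)⟩

theorem exists_isTrianglePacking_forall_card_le [Fintype V] (A : Finset (Finset V)) :
    ∃ F, IsTrianglePacking A F ∧ ∀ F', IsTrianglePacking A F' → #F' ≤ #F := by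
  classical
  obtain ⟨F, hF, hmax⟩ := exists_max_image {F | IsTrianglePacking A F} card
    ⟨∅, mem_filter.2 ⟨mem_univ _, by simp [IsTrianglePacking]⟩⟩
  exact ⟨F, (mem_filter.1 hF).2, fun F' hF' ↦ hmax F' (mem_filter.2 ⟨mem_univ _, hF'⟩)⟩

variable [DecidableEq V]

theorem IsTrianglePacking.biUnion_subset {A F : Finset (Finset V)} (hF : IsTrianglePacking A F) :
    F.biUnion (powersetCard 2) ⊆ A :=
  Finset.biUnion_subset.2 fun T hT ↦ (hF.1 T hT).2

def pairGraph (E : Finset (Finset V)) : SimpleGraph V where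
  Adj u v := u ≠ v ∧ {u, v} ∈ E
  symm := ⟨fun u v h ↦ ⟨h.1.symm, pair_comm u v ▸ h.2⟩⟩
  loopless := ⟨fun _ h ↦ h.1 rfl⟩

@[simp]
theorem pairGraph_adj {E : Finset (Finset V)} {u v : V} :
    (pairGraph E).Adj u v ↔ u ≠ v ∧ {u, v} ∈ E :=
  Iff.rfl

def deleteTriangles (A F : Finset (Finset V)) : SimpleGraph V :=
  pairGraph (A \ F.biUnion (powersetCard 2))

theorem powersetCard_two_subset_of_isClique {E : Finset (Finset V)} {t : Finset V}
    (ht : (pairGraph E).IsClique t) : t.powersetCard 2 ⊆ E := by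
  intro e he
  obtain ⟨het, hcard⟩ := mem_powersetCard.1 he
  obtain ⟨x, y, hxy, rfl⟩ := card_eq_two.1 hcard
  exact (pairGraph_adj.1 (ht (het (mem_insert_self x _)) (het (by simp)) hxy)).2

theorem card_biUnion_powersetCard_two {F : Finset (Finset V)} (hF : ∀ T ∈ F, #T = 3)
    (hdisj : (F : Set (Finset V)).PairwiseDisjoint (powersetCard 2)) :
    #(F.biUnion (powersetCard 2)) = 3 * #F := by
  rw [card_biUnion hdisj, sum_congr rfl fun T hT ↦ by rw [card_powersetCard, hF T hT], sum_const,
    smul_eq_mul, mul_comm]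
  rfl

theorem cliqueFree_three_deleteTriangles {A F : Finset (Finset V)}
    (hF : IsTrianglePacking A F) (hmax : ∀ F', IsTrianglePacking A F' → #F' ≤ #F) :
    (deleteTriangles A F).CliqueFree 3 := by
  intro t ht
  have hsub := powersetCard_two_subset_of_isClique ht.isClique
  have hne : (t.powersetCard 2).Nonempty :=
    powersetCard_nonempty.2 (by rw [ht.card_eq]; norm_num)
  have hdisj : ∀ T ∈ F, Disjoint (t.powersetCard 2) (T.powersetCard 2) := fun T hT ↦
    disjoint_left.2 fun e he heT ↦ (mem_sdiff.1 (hsub he)).2 (mem_biUnion.2 ⟨T, hT, heT⟩)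
  have htF : t ∉ F := fun htF ↦ hne.ne_empty (disjoint_self_iff_empty _ |>.1 (hdisj t htF))
  have hpack : IsTrianglePacking A (insert t F) := by
    refine ⟨forall_mem_insert _ _ _ |>.2
      ⟨⟨ht.card_eq, fun e he ↦ (mem_sdiff.1 (hsub he)).1⟩, hF.1⟩, ?_⟩
    rw [coe_insert]
    exact hF.2.insert fun T hT _ ↦ hdisj T hT
  have := hmax _ hpack
  rw [card_insert_of_notMem htF] at this
  omega

theorem exists_isTrianglePacking_of_isIndepSet {A F : Finset (Finset V)}
    (hF : IsTrianglePacking A F) {S : Finset V} (hS : (deleteTriangles A F).IsIndepSet S) {j : ℕ}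
    (hj : 3 * j ≤ #(A ∩ S.powersetCard 2)) :
    ∃ F', IsTrianglePacking A F' ∧ #F' = j ∧ ∀ T ∈ F', 2 ≤ #(T ∩ S) := by
  set FS := {T ∈ F | 2 ≤ #(T ∩ S)}
  -- an edge of `A` inside the independent set `S` must have been deleted
  have hcover : A ∩ S.powersetCard 2 ⊆ FS.biUnion (powersetCard 2) := by
    intro e he
    obtain ⟨heA, heS⟩ := mem_inter.1 he
    obtain ⟨heS, hcard⟩ := mem_powersetCard.1 heS
    obtain ⟨x, y, hxy, rfl⟩ := card_eq_two.1 hcard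
    have hcov : {x, y} ∈ F.biUnion (powersetCard 2) := by
      by_contra h
      exact hS (heS (mem_insert_self _ _)) (heS (by simp)) hxy
        (pairGraph_adj.2 ⟨hxy, mem_sdiff.2 ⟨heA, h⟩⟩)
    obtain ⟨T, hT, heT⟩ := mem_biUnion.1 hcov
    refine mem_biUnion.2 ⟨T, mem_filter.2 ⟨hT, ?_⟩, heT⟩
    exact hcard ▸ card_le_card (subset_inter (mem_powersetCard.1 heT).1 heS)
  have hFS : j ≤ #FS := by
    have := (hj.trans (card_le_card hcover)).trans (card_biUnion_le_card_mul FS _ 3 fun T hT ↦ by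
      rw [card_powersetCard, (hF.1 T (mem_filter.1 hT).1).1]; rfl)
    omega
  obtain ⟨F', hF'FS, hcard⟩ := exists_subset_card_eq hFS
  exact ⟨F', hF.mono (hF'FS.trans (filter_subset _ _)), hcard,
    fun T hT ↦ (mem_filter.1 (hF'FS hT)).2⟩

theorem card_filter_two_le_card_inter_le [Fintype V] (S : Finset V) :
    #{T : Finset V | #T = 3 ∧ 2 ≤ #(T ∩ S)} ≤ (#S).choose 2 * Fintype.card V := by
  calc #{T : Finset V | #T = 3 ∧ 2 ≤ #(T ∩ S)}
      ≤ #((S.powersetCard 2 ×ˢ univ).image fun ex : Finset V × V ↦ insert ex.2 ex.1) := by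
        refine card_le_card fun T hT ↦ ?_
        obtain ⟨hT3, hT2⟩ := (mem_filter.1 hT).2
        obtain ⟨e, heTS, he⟩ := exists_subset_card_eq hT2
        have heT : e ⊆ T := heTS.trans inter_subset_left
        obtain ⟨x, hx⟩ : (T \ e).Nonempty := by
          rw [← card_pos, card_sdiff_of_subset heT]; omega
        obtain ⟨hxT, hxe⟩ := mem_sdiff.1 hx
        refine mem_image.2 ⟨(e, x), mem_product.2
          ⟨mem_powersetCard.2 ⟨heTS.trans inter_subset_right, he⟩, mem_univ _⟩, ?_⟩
        exact eq_of_subset_of_card_le (insert_subset hxT heT)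
          (by rw [card_insert_of_notMem hxe, he, hT3])
    _ ≤ (#S).choose 2 * Fintype.card V := by
        refine card_image_le.trans ?_
        rw [card_product, card_powersetCard, card_univ]

end Graph

section Deletion

variable {V : Type*} [Fintype V] [DecidableEq V]

open Classical in
theorem sum_bernoulliWeight_isIndepSet_le {p : ℝ} (hp0 : 0 ≤ p) (hp1 : p ≤ 1)
    {fam : Finset (Finset V) → Finset (Finset V)} (hfam : ∀ A, IsTrianglePacking A (fam A))
    (S : Finset V) (j : ℕ) :
    ∑ A ∈ (univ.powersetCard 2).powerset with (deleteTriangles A (fam A)).IsIndepSet S,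
      bernoulliWeight p (univ.powersetCard 2) A
      ≤ 2 ^ (3 * j) * (1 - p / 2) ^ (#S).choose 2
        + ((#S).choose 2 * Fintype.card V).choose j * p ^ (3 * j) := by
  set K : Finset (Finset V) := univ.powersetCard 2
  set TS : Finset (Finset V) := {T | #T = 3 ∧ 2 ≤ #(T ∩ S)}
  set FamS : Finset (Finset (Finset V)) :=
    {F ∈ TS.powersetCard j | (F : Set (Finset V)).PairwiseDisjoint (powersetCard 2)}
  have hw : ∀ A ∈ K.powerset, 0 ≤ bernoulliWeight p K A :=
    fun A _ ↦ bernoulliWeight_nonneg hp0 hp1 K A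
  have hsplit : ∀ A ∈ K.powerset, (deleteTriangles A (fam A)).IsIndepSet S →
      #(A ∩ S.powersetCard 2) < 3 * j ∨ ∃ F ∈ FamS, F.biUnion (powersetCard 2) ⊆ A := by
    intro A _ hS
    by_contra! h
    obtain ⟨F, hF, hFj, hFS⟩ := exists_isTrianglePacking_of_isIndepSet (hfam A) hS h.1
    exact h.2 F (mem_filter.2 ⟨mem_powersetCard.2 ⟨fun T hT ↦
      mem_filter.2 ⟨mem_univ _, (hF.1 T hT).1, hFS T hT⟩, hFj⟩, hF.2⟩) hF.biUnion_subset
  have hfew : ∑ A ∈ K.powerset with #(A ∩ S.powersetCard 2) < 3 * j, bernoulliWeight p K A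
      ≤ 2 ^ (3 * j) * (1 - p / 2) ^ (#S).choose 2 := by
    simpa only [card_powersetCard] using
      sum_bernoulliWeight_card_inter_lt_le hp0 hp1 (powersetCard_mono (subset_univ S)) (3 * j)
  have hpacked : ∑ A ∈ K.powerset with ∃ F ∈ FamS, F.biUnion (powersetCard 2) ⊆ A,
      bernoulliWeight p K A ≤ ((#S).choose 2 * Fintype.card V).choose j * p ^ (3 * j) := by
    calc ∑ A ∈ K.powerset with ∃ F ∈ FamS, F.biUnion (powersetCard 2) ⊆ A,
          bernoulliWeight p K A
        ≤ ∑ F ∈ FamS, ∑ A ∈ K.powerset with F.biUnion (powersetCard 2) ⊆ A,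
            bernoulliWeight p K A := sum_filter_exists_le hw
      _ = ∑ F ∈ FamS, p ^ (3 * j) := by
          refine sum_congr rfl fun F hF ↦ ?_
          obtain ⟨hFTS, hdisj⟩ := mem_filter.1 hF
          obtain ⟨hFTS, hFj⟩ := mem_powersetCard.1 hFTS
          rw [sum_bernoulliWeight_superset p (biUnion_subset.2 fun T _ ↦
              powersetCard_mono (subset_univ T)),
            card_biUnion_powersetCard_two (fun T hT ↦ (mem_filter.1 (hFTS hT)).2.1) hdisj, hFj]
      _ ≤ ((#S).choose 2 * Fintype.card V).choose j * p ^ (3 * j) := by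
          rw [sum_const, nsmul_eq_mul]
          gcongr
          refine (card_filter_le _ _).trans ?_
          rw [card_powersetCard]
          exact Nat.choose_le_choose j (card_filter_two_le_card_inter_le S)
  exact (sum_filter_le_sum_filter_add_sum_filter hw hsplit).trans (add_le_add hfew hpacked)

theorem exists_cliqueFree_three_not_isIndepSet {p : ℝ} (hp0 : 0 ≤ p) (hp1 : p ≤ 1) (k j : ℕ)
    (h : ((Fintype.card V).choose k : ℝ) * (2 ^ (3 * j) * (1 - p / 2) ^ k.choose 2
        + ((k.choose 2 * Fintype.card V).choose j : ℝ) * p ^ (3 * j)) < 1) :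
    ∃ G : SimpleGraph V, G.CliqueFree 3 ∧ ∀ S : Finset V, #S = k → ¬ G.IsIndepSet S := by
  classical
  choose fam hfam hmax using exists_isTrianglePacking_forall_card_le (V := V)
  set K : Finset (Finset V) := univ.powersetCard 2
  by_contra! hcon
  have hcover : ∀ A ∈ K.powerset, ∃ S ∈ (univ : Finset V).powersetCard k,
      (deleteTriangles A (fam A)).IsIndepSet S := fun A _ ↦ by
    obtain ⟨S, hSk, hS⟩ := hcon _ (cliqueFree_three_deleteTriangles (hfam A) (hmax A))
    exact ⟨S, mem_powersetCard.2 ⟨subset_univ S, hSk⟩, hS⟩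
  refine h.not_ge ?_
  calc (1 : ℝ) = ∑ A ∈ K.powerset, bernoulliWeight p K A := (sum_bernoulliWeight p K).symm
    _ = ∑ A ∈ K.powerset with ∃ S ∈ (univ : Finset V).powersetCard k,
          (deleteTriangles A (fam A)).IsIndepSet S,
        bernoulliWeight p K A := by rw [filter_true_of_mem hcover]
    _ ≤ ∑ S ∈ (univ : Finset V).powersetCard k,
          ∑ A ∈ K.powerset with (deleteTriangles A (fam A)).IsIndepSet S,
            bernoulliWeight p K A :=
        sum_filter_exists_le fun A _ ↦ bernoulliWeight_nonneg hp0 hp1 K A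
    _ ≤ ∑ S ∈ (univ : Finset V).powersetCard k, (2 ^ (3 * j) * (1 - p / 2) ^ k.choose 2
          + ((k.choose 2 * Fintype.card V).choose j : ℝ) * p ^ (3 * j)) := by
        refine sum_le_sum fun S hS ↦ ?_
        rw [← (mem_powersetCard.1 hS).2]
        exact sum_bernoulliWeight_isIndepSet_le hp0 hp1 hfam S j
    _ = _ := by rw [sum_const, card_powersetCard, card_univ, nsmul_eq_mul]

end Deletion

theorem choose_mul_pow_le (D j : ℕ) {x : ℝ} (hx : 0 ≤ x) :
    (D.choose j : ℝ) * x ^ j ≤ (exp 1 * D * x / j) ^ j := by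
  rcases j.eq_zero_or_pos with rfl | hj
  · simp
  have hj' : (0 : ℝ) < j := Nat.cast_pos.2 hj
  calc (D.choose j : ℝ) * x ^ j ≤ (D : ℝ) ^ j / j.factorial * x ^ j := by
        gcongr; exact Nat.choose_le_pow_div j D
    _ = (D * x / j) ^ j * ((j : ℝ) ^ j / j.factorial) := by
        rw [div_pow, mul_pow]; field_simp
    _ ≤ (D * x / j) ^ j * exp j := by
        gcongr; exact pow_div_factorial_le_exp _ hj'.le j
    _ = (exp 1 * D * x / j) ^ j := by
        rw [← exp_one_pow, ← mul_pow]; ring_nf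

theorem two_pow_mul_one_sub_half_pow_le {p : ℝ} (hp : p ≤ 2) (m N : ℕ) :
    2 ^ m * (1 - p / 2) ^ N ≤ exp (m - p * N / 2) := by
  have h2 : (2 : ℝ) ≤ exp 1 := by linarith [add_one_le_exp (1 : ℝ)]
  have hbase : 1 - p / 2 ≤ exp (-(p / 2)) := by linarith [add_one_le_exp (-(p / 2))]
  calc 2 ^ m * (1 - p / 2) ^ N ≤ exp 1 ^ m * exp (-(p / 2)) ^ N :=
        mul_le_mul (pow_le_pow_left₀ zero_le_two h2 m)
          (pow_le_pow_left₀ (by linarith) hbase N) (pow_nonneg (by linarith) N) (by positivity)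
    _ = exp (m - p * N / 2) := by
        rw [exp_one_pow, ← exp_nat_mul, ← exp_add]; ring_nf

theorem choose_le_exp_mul_log {n : ℕ} (hn : 0 < n) (k : ℕ) :
    (n.choose k : ℝ) ≤ exp (k * log n) := by
  rw [exp_nat_mul, exp_log (Nat.cast_pos.2 hn)]
  exact_mod_cast Nat.choose_le_pow n k

section Parameters

/- Here `R = √n`, `L = log n` and `p = 1 / (30 R)`. From `k ≥ 750 R L` we get `p k ≥ 25 L`, which
beats the `4 k L` lost to `C(n, k)` and `2 ^ (3 j)`; and `e C(k, 2) n p ^ 3 / j` is at most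
`3 · 751 / 54000 < e⁻²`. -/

variable {R L : ℝ} {k j : ℕ}

theorem exp_mul_two_pow_mul_one_sub_half_pow_le (hR : 1 ≤ R) (hL : 1 ≤ L)
    (hk : 750 * R * L ≤ k) (hj : j ≤ k * L + 1) :
    exp (k * L) * (2 ^ (3 * j) * (1 - 1 / (30 * R) / 2) ^ k.choose 2) ≤ exp (-1) := by
  have hp : 1 / (30 * R) ≤ 2 := by
    rw [div_le_iff₀ (by positivity)]; linarith
  have hpk : 25 * L ≤ 1 / (30 * R) * k := by
    rw [one_div_mul_eq_div, le_div_iff₀ (by positivity)]; linarith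
  have hk750 : 750 ≤ (k : ℝ) := by nlinarith
  calc exp (k * L) * (2 ^ (3 * j) * (1 - 1 / (30 * R) / 2) ^ k.choose 2)
      ≤ exp (k * L) * exp ((3 * j : ℕ) - 1 / (30 * R) * (k.choose 2 : ℕ) / 2) := by
        gcongr; exact two_pow_mul_one_sub_half_pow_le hp _ _
    _ ≤ exp (-1) := by
        rw [← exp_add, exp_le_exp, Nat.cast_choose_two]
        push_cast
        nlinarith [mul_le_mul_of_nonneg_right hpk (by linarith : (0 : ℝ) ≤ k - 1)]

theorem exp_mul_choose_mul_pow_le {n : ℕ} (hR : R ^ 2 = n) (hR1 : 1 ≤ R)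
    (hk : k ≤ 750 * R * L + 1) (hkL : 1 ≤ k * L) (hj : k * L ≤ j) :
    exp (k * L) * ((k.choose 2 * n).choose j * (1 / (30 * R)) ^ (3 * j)) ≤ exp (-1) := by
  have hjpos : (0 : ℝ) < j := by linarith
  have hbase : exp 1 * (k.choose 2 * n : ℕ) * (1 / (30 * R)) ^ 3 / j ≤ exp (-2) := by
    have he : exp 1 ≤ 3 := exp_one_lt_three.le
    have he2 : exp 2 ≤ 9 := by
      rw [show (2 : ℝ) = 1 + 1 by norm_num, exp_add]; nlinarith [exp_pos 1]
    have hk1 : (1 : ℝ) ≤ k :=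
      Nat.one_le_cast.2 (Nat.pos_of_ne_zero (by rintro rfl; norm_num at hkL))
    have hcount : exp 1 * k * (k - 1) ≤ 6000 * R * j := by
      have h1 : exp 1 * k * (k - 1) ≤ 3 * k * (750 * R * L) :=
        mul_le_mul (by gcongr) (by linarith) (by linarith) (by positivity)
      nlinarith
    have hform : exp 1 * (k.choose 2 * n : ℕ) * (1 / (30 * R)) ^ 3 / j
        = exp 1 * k * (k - 1) / (54000 * R * j) := by
      push_cast
      rw [Nat.cast_choose_two, ← hR]
      field_simp
      ring
    calc exp 1 * (k.choose 2 * n : ℕ) * (1 / (30 * R)) ^ 3 / j ≤ 9⁻¹ := by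
          rw [hform, div_le_iff₀ (by positivity)]; linarith
      _ ≤ exp (-2) := by rw [exp_neg]; exact inv_anti₀ (exp_pos 2) he2
  calc exp (k * L) * ((k.choose 2 * n).choose j * (1 / (30 * R)) ^ (3 * j))
      ≤ exp (k * L) * (exp 1 * (k.choose 2 * n : ℕ) * (1 / (30 * R)) ^ 3 / j) ^ j := by
        rw [pow_mul]; gcongr; exact choose_mul_pow_le _ _ (by positivity)
    _ ≤ exp (k * L) * exp (-2) ^ j := by gcongr
    _ ≤ exp (-1) := by
        rw [← exp_nat_mul, ← exp_add, exp_le_exp]; linarith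

end Parameters

theorem choose_mul_add_lt_one {n k j : ℕ} (hn : 3 ≤ n) (hk : 750 * √n * log n ≤ k)
    (hk' : k ≤ 750 * √n * log n + 1) (hj : k * log n ≤ j) (hj' : j ≤ k * log n + 1) :
    (n.choose k : ℝ) * (2 ^ (3 * j) * (1 - 1 / (30 * √n) / 2) ^ k.choose 2
      + ((k.choose 2 * n).choose j : ℝ) * (1 / (30 * √n)) ^ (3 * j)) < 1 := by
  have hn3 : (3 : ℝ) ≤ n := by exact_mod_cast hn
  have hR : 1 ≤ √(n : ℝ) := one_le_sqrt.2 (by linarith)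
  have hL : 1 ≤ log n := by
    rw [le_log_iff_exp_le (by positivity)]; linarith [exp_one_lt_three]
  have hkL : 1 ≤ k * log n := by nlinarith
  have h1 := exp_mul_two_pow_mul_one_sub_half_pow_le hR hL hk hj'
  have h2 := exp_mul_choose_mul_pow_le (sq_sqrt (Nat.cast_nonneg n)) hR hk' hkL hj
  have he : exp (-1) < 1 / 2 := by
    rw [exp_neg, inv_lt_comm₀ (exp_pos 1) (by norm_num)]; norm_num [exp_one_gt_two]
  calc (n.choose k : ℝ) * (2 ^ (3 * j) * (1 - 1 / (30 * √n) / 2) ^ k.choose 2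
        + ((k.choose 2 * n).choose j : ℝ) * (1 / (30 * √n)) ^ (3 * j))
      ≤ exp (k * log n) * (2 ^ (3 * j) * (1 - 1 / (30 * √n) / 2) ^ k.choose 2
        + ((k.choose 2 * n).choose j : ℝ) * (1 / (30 * √n)) ^ (3 * j)) := by
        have hq : 0 ≤ 1 - 1 / (30 * √(n : ℝ)) / 2 := by
          rw [sub_nonneg, div_le_one two_pos, div_le_iff₀ (by positivity)]; linarith
        exact mul_le_mul_of_nonneg_right (choose_le_exp_mul_log (by omega) k)
          (add_nonneg (mul_nonneg (by positivity) (pow_nonneg hq _)) (by positivity))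
    _ < 1 := by linarith

end TriangleFreeRamsey

/-- There exists C > 0 such that for all sufficiently large n there is a
triangle-free graph G on [n] with no independent set of size ⌈C·√n·log n⌉ (equivalently,
r(3,k) = Ω(k²/log² k)). -/
theorem stmt11 :
    ∃ C : ℝ, 0 < C ∧ ∃ N : ℕ, ∀ n : ℕ, N ≤ n →
      ∃ G : SimpleGraph (Fin n), G.CliqueFree 3 ∧
        ∀ S : Finset (Fin n), S.card = ⌈C * Real.sqrt n * Real.log n⌉₊ →
          ∃ u ∈ S, ∃ v ∈ S, G.Adj u v := by
  refine ⟨750, by norm_num, 3, fun n hn ↦ ?_⟩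
  have hR : 1 ≤ √(n : ℝ) := one_le_sqrt.2 (by exact_mod_cast (by omega : 1 ≤ n))
  have hp1 : 1 / (30 * √(n : ℝ)) ≤ 1 := by rw [div_le_one (by positivity)]; linarith
  set k := ⌈750 * √(n : ℝ) * log n⌉₊
  have hbound := TriangleFreeRamsey.choose_mul_add_lt_one hn (Nat.le_ceil _)
    (Nat.ceil_lt_add_one (by positivity)).le (Nat.le_ceil (k * log n))
    (Nat.ceil_lt_add_one (by positivity)).le
  obtain ⟨G, hG, hGk⟩ := TriangleFreeRamsey.exists_cliqueFree_three_not_isIndepSet (V := Fin n)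
    (by positivity) hp1 k _ (by simpa only [Fintype.card_fin] using hbound)
  refine ⟨G, hG, fun S hS ↦ ?_⟩
  by_contra! h
  exact hGk S hS fun u hu v hv _ ↦ h u hu v hv
end

section
/- Let Γ and H be graphs on the same finite vertex set, and write Γ∖H for the graph with edge set E(Γ)∖E(H). Suppose there exists an edge uv ∈ E(Γ) ∩ E(H) that is H-good, meaning that no vertex w is adjacent to both u and v in Γ∖H (equivalently, uv ∉ E((Γ∖H)²)). Then every subgraph G of Γ that is maximal among triangle-free subgraphs of Γ satisfies E(G) ∩ E(H) ≠ ∅. -/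
/-- Let Γ, H be graphs on a common finite vertex set and suppose
uv ∈ E(Γ) ∩ E(H) is H-good: no vertex w is adjacent to both u and v in Γ∖H. Then every
maximal triangle-free subgraph G of Γ shares an edge with H. -/
theorem stmt13 {V : Type*} [Fintype V] (Γ H : SimpleGraph V) (u v : V)
    (huv : Γ.Adj u v) (hHuv : H.Adj u v)
    (hgood : ∀ w : V, ¬((Γ \ H).Adj u w ∧ (Γ \ H).Adj v w)) :
    ∀ G : SimpleGraph V, G ≤ Γ → G.CliqueFree 3 →
      (∀ G' : SimpleGraph V, G' ≤ Γ → G'.CliqueFree 3 → G ≤ G' → G' = G) →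
      (G.edgeSet ∩ H.edgeSet).Nonempty := by
  classical
  intro G hGΓ hGfree hmax
  by_contra hempty
  rw [Set.not_nonempty_iff_eq_empty] at hempty
  -- G is a subgraph of Γ \ H
  have hGsub : G ≤ Γ \ H := by
    intro a b hab
    refine ⟨hGΓ hab, fun hH => ?_⟩
    have : s(a, b) ∈ G.edgeSet ∩ H.edgeSet := ⟨hab, hH⟩
    rw [hempty] at this
    exact this
  -- add the edge uv
  set G' : SimpleGraph V := G ⊔ SimpleGraph.fromEdgeSet {s(u, v)} with hG'
  have hne : u ≠ v := huv.ne
  have hG'adj : ∀ a b : V, G'.Adj a b ↔ G.Adj a b ∨ (a = u ∧ b = v) ∨ (a = v ∧ b = u) := by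
    intro a b
    simp only [hG', SimpleGraph.sup_adj, SimpleGraph.fromEdgeSet_adj, Set.mem_singleton_iff,
      Sym2.eq, Sym2.rel_iff', Prod.mk.injEq, Prod.swap_prod_mk]
    constructor
    · rintro (h | ⟨(⟨rfl, rfl⟩ | ⟨rfl, rfl⟩), _⟩)
      · exact Or.inl h
      · exact Or.inr (Or.inl ⟨rfl, rfl⟩)
      · exact Or.inr (Or.inr ⟨rfl, rfl⟩)
    · rintro (h | ⟨rfl, rfl⟩ | ⟨rfl, rfl⟩)
      · exact Or.inl h
      · exact Or.inr ⟨Or.inl ⟨rfl, rfl⟩, hne⟩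
      · exact Or.inr ⟨Or.inr ⟨rfl, rfl⟩, hne.symm⟩
  have hG'le : G' ≤ Γ := by
    intro a b hab
    rcases (hG'adj a b).1 hab with h | ⟨rfl, rfl⟩ | ⟨rfl, rfl⟩
    · exact hGΓ h
    · exact huv
    · exact huv.symm
  have hGle : G ≤ G' := le_sup_left
  -- any common neighbor of u and v in G contradicts hgood
  have hno : ∀ w : V, ¬(G.Adj u w ∧ G.Adj v w) := by
    intro w ⟨h1, h2⟩
    exact hgood w ⟨hGsub h1, hGsub h2⟩
  have hG'free : G'.CliqueFree 3 := by
    intro s hs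
    rw [SimpleGraph.is3Clique_iff] at hs
    obtain ⟨a, b, c, hab, hac, hbc, rfl⟩ := hs
    rw [hG'adj] at hab hac hbc
    rcases hab with hab | ⟨h1, h2⟩ | ⟨h1, h2⟩ <;>
      rcases hac with hac | ⟨h3, h4⟩ | ⟨h3, h4⟩ <;>
      rcases hbc with hbc | ⟨h5, h6⟩ | ⟨h5, h6⟩ <;>
      subst_vars <;>
      first
      | exact hGfree {a, b, c} (SimpleGraph.is3Clique_triple_iff.2 ⟨hab, hac, hbc⟩)
      | exact hne rfl
      | exact hab.ne rfl
      | exact hac.ne rfl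
      | exact hbc.ne rfl
      | exact hno _ ⟨hab, hac⟩
      | exact hno _ ⟨hac, hab⟩
      | exact hno _ ⟨hab.symm, hac.symm⟩
      | exact hno _ ⟨hac.symm, hab.symm⟩
      | exact hno _ ⟨hab, hbc.symm⟩
      | exact hno _ ⟨hbc.symm, hab⟩
      | exact hno _ ⟨hab.symm, hbc⟩
      | exact hno _ ⟨hbc, hab.symm⟩
      | exact hno _ ⟨hac, hbc⟩
      | exact hno _ ⟨hbc, hac⟩
  have heq := hmax G' hG'le hG'free hGle
  have huvG : G.Adj u v := by
    rw [← heq, hG'adj]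
    exact Or.inr (Or.inl ⟨rfl, rfl⟩)
  have : s(u, v) ∈ G.edgeSet ∩ H.edgeSet := ⟨huvG, hHuv⟩
  rw [hempty] at this
  exact this
end

section
/- Let X be a finite set, let p ∈ [0,1], and let μ_p be the product measure on the power set 2^X given by μ_p(S) = p^{|S|}(1−p)^{|X∖S|}. Let ℱ ⊆ 2^X and suppose g : 2^X → ℝ_{≥0} is a function such that Σ_{T ⊇ S} g(T) ≥ 1 for every S ∈ ℱ, and Σ_{T ⊆ X} g(T)(1−p)^{|X∖T|} ≤ 1/2. Then μ_p(ℱ) = Σ_{S∈ℱ} μ_p(S) ≤ 1/2. -/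
/-- Let X be a finite set, p ∈ [0,1], and μ_p(S) = p^{|S|}(1−p)^{|X∖S|}.
If ℱ ⊆ 2^X and g : 2^X → ℝ≥0 satisfies Σ_{T ⊇ S} g(T) ≥ 1 for every S ∈ ℱ and
Σ_{T ⊆ X} g(T)(1−p)^{|X∖T|} ≤ 1/2, then μ_p(ℱ) = Σ_{S∈ℱ} μ_p(S) ≤ 1/2. -/
theorem stmt15 {X : Type*} [Fintype X] [DecidableEq X] (p : ℝ) (hp0 : 0 ≤ p) (hp1 : p ≤ 1)
    (𝓕 : Finset (Finset X)) (g : Finset X → ℝ) (hg : ∀ T, 0 ≤ g T)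
    (hcov : ∀ S ∈ 𝓕, 1 ≤ ∑ T ∈ Finset.univ.filter (fun T => S ⊆ T), g T)
    (hsum : ∑ T : Finset X, g T * (1 - p) ^ (Fintype.card X - T.card) ≤ 1 / 2) :
    ∑ S ∈ 𝓕, p ^ S.card * (1 - p) ^ (Fintype.card X - S.card) ≤ 1 / 2 := by
  set n := Fintype.card X with hn
  set μ : Finset X → ℝ := fun S => p ^ S.card * (1 - p) ^ (n - S.card) with hμ
  have hμ0 : ∀ S, 0 ≤ μ S := fun S =>
    mul_nonneg (pow_nonneg hp0 _) (pow_nonneg (by linarith) _)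
  calc ∑ S ∈ 𝓕, μ S
      ≤ ∑ S ∈ 𝓕, (∑ T ∈ Finset.univ.filter (fun T => S ⊆ T), g T) * μ S := by
        refine Finset.sum_le_sum fun S hS => ?_
        exact le_mul_of_one_le_left (hμ0 S) (hcov S hS)
    _ = ∑ S ∈ 𝓕, ∑ T ∈ Finset.univ.filter (fun T => S ⊆ T), g T * μ S := by
        simp [Finset.sum_mul]
    _ = ∑ T : Finset X, ∑ S ∈ 𝓕.filter (fun S => S ⊆ T), g T * μ S := by
        refine Finset.sum_comm' fun S T => ?_
        simp
    _ ≤ ∑ T : Finset X, ∑ S ∈ T.powerset, g T * μ S := by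
        refine Finset.sum_le_sum fun T _ => ?_
        refine Finset.sum_le_sum_of_subset_of_nonneg ?_ fun S _ _ => mul_nonneg (hg T) (hμ0 S)
        intro S hS
        simp only [Finset.mem_filter, Finset.mem_powerset] at hS ⊢
        exact hS.2
    _ = ∑ T : Finset X, g T * (1 - p) ^ (n - T.card) := by
        refine Finset.sum_congr rfl fun T _ => ?_
        rw [← Finset.mul_sum]
        congr 1
        have key := Finset.sum_pow_mul_eq_add_pow p (1 - p) T
        calc ∑ S ∈ T.powerset, μ S
            = ∑ S ∈ T.powerset, p ^ S.card * (1 - p) ^ (T.card - S.card)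
                * (1 - p) ^ (n - T.card) := by
              refine Finset.sum_congr rfl fun S hS => ?_
              rw [Finset.mem_powerset] at hS
              have h1 : S.card ≤ T.card := Finset.card_le_card hS
              have h2 : T.card ≤ n := Finset.card_le_univ T
              simp only [hμ]; rw [show n - S.card = (T.card - S.card) + (n - T.card) by omega,
                pow_add, mul_assoc]
          _ = (1 - p) ^ (n - T.card) := by
              rw [← Finset.sum_mul, key]
              simp
    _ ≤ 1 / 2 := hsum
end

section
/- There exists a universal constant c > 0 such that for all n and m ≥ 1 the following holds: let H be a graph on [n] with exactly C(n,2) − m edges, assign each vertex of [n] independently and uniformly at random to one of two classes, and let G be the complete bipartite graph consisting of all pairs of vertices assigned to different classes. Then the probability that E(G) ⊆ E(H) is at most exp(−c·√m). -/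
open Classical in
lemma count_le (n : ℕ) (H : SimpleGraph (Fin n)) (S : Finset (Fin n)) (g : Fin n → Fin n)
    (hg : ∀ s ∈ S, g s ∉ S ∧ s ≠ g s ∧ ¬H.Adj s (g s)) :
    (Finset.univ.filter (fun f : Fin n → Bool =>
        ∀ u v : Fin n, u ≠ v → f u ≠ f v → H.Adj u v)).card ≤ 2 ^ (n - S.card) := by
  classical
  have key := Finset.card_le_card_of_injOn
    (f := fun (f : Fin n → Bool) (x : {x : Fin n // x ∉ S}) => f x.1)
    (s := Finset.univ.filter (fun f : Fin n → Bool =>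
        ∀ u v : Fin n, u ≠ v → f u ≠ f v → H.Adj u v))
    (t := (Finset.univ : Finset ({x : Fin n // x ∉ S} → Bool)))
    (fun f _ => Finset.mem_univ _) ?_
  · calc _ ≤ (Finset.univ : Finset ({x : Fin n // x ∉ S} → Bool)).card := key
      _ = 2 ^ (n - S.card) := by
        rw [Finset.card_univ, Fintype.card_fun]
        congr 1
        rw [Fintype.card_subtype_compl, Fintype.card_coe, Fintype.card_fin]
  · intro f hf f' hf' h
    simp only [Finset.mem_coe, Finset.mem_filter, Finset.mem_univ, true_and] at hf hf'
    funext x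
    by_cases hx : x ∈ S
    · obtain ⟨h1, h2, h3⟩ := hg x hx
      have e1 : f x = f (g x) := by
        by_contra hne; exact h3 (hf x (g x) h2 hne)
      have e2 : f' x = f' (g x) := by
        by_contra hne; exact h3 (hf' x (g x) h2 hne)
      have e3 : f (g x) = f' (g x) := congrFun h ⟨g x, h1⟩
      rw [e1, e3, ← e2]
    · exact congrFun h ⟨x, hx⟩


open Classical in
lemma exists_S (n m : ℕ) (hm : 1 ≤ m) (H : SimpleGraph (Fin n))
    (hH : H.edgeSet.ncard + m = n.choose 2) :
    ∃ (S : Finset (Fin n)) (g : Fin n → Fin n),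
      (∀ s ∈ S, g s ∉ S ∧ s ≠ g s ∧ ¬H.Adj s (g s)) ∧ (m : ℝ) ≤ ((2 * S.card : ℕ) : ℝ)^2 := by
  classical
  set K := Hᶜ with hK
  have hKm : K.edgeFinset.card = m := by
    have hsup : H ⊔ K = ⊤ := sup_compl_eq_top
    have hdisj : Disjoint H.edgeFinset K.edgeFinset := by
      rw [Finset.disjoint_left]
      intro e heH heK
      rw [SimpleGraph.mem_edgeFinset] at heH heK
      revert heH heK
      induction e using Sym2.ind with
      | _ a b =>
        intro heH heK
        rw [SimpleGraph.mem_edgeSet] at heH heK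
        rw [hK, SimpleGraph.compl_adj] at heK
        exact heK.2 heH
    have h1 : H.edgeFinset.card + K.edgeFinset.card = n.choose 2 := by
      have htop : ((⊤ : SimpleGraph (Fin n)).edgeFinset).card = n.choose 2 := by
        simpa using SimpleGraph.card_edgeFinset_top_eq_card_choose_two (V := Fin n)
      have e : (H ⊔ K).edgeFinset = H.edgeFinset ∪ K.edgeFinset :=
        SimpleGraph.edgeFinset_sup
      have e2 : (H ⊔ K).edgeFinset = (⊤ : SimpleGraph (Fin n)).edgeFinset := by
        ext x
        simp only [SimpleGraph.mem_edgeFinset, hsup]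
      rw [← Finset.card_union_of_disjoint hdisj, ← e, e2, htop]
    have h2 : H.edgeSet.ncard = H.edgeFinset.card := Set.ncard_eq_toFinset_card' _
    omega
  set supp := Finset.univ.filter (fun v : Fin n => ∃ u, K.Adj v u) with hsupp
  set k := supp.card with hk
  -- degree bound
  have hmem : ∀ v u, K.Adj v u → v ∈ supp := fun v u h => by
    simp only [hsupp, Finset.mem_filter, Finset.mem_univ, true_and]; exact ⟨u, h⟩
  have hdegsum : 2 * m = ∑ v ∈ supp, K.degree v := by
    rw [← hKm, ← SimpleGraph.sum_degrees_eq_twice_card_edges]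
    refine (Finset.sum_subset (Finset.subset_univ supp) ?_).symm
    intro v _ hv
    simp only [hsupp, Finset.mem_filter, Finset.mem_univ, true_and, not_exists] at hv
    have : K.neighborFinset v = ∅ := by
      ext u
      simp [hv u]
    rw [SimpleGraph.degree, this, Finset.card_empty]
  have hdeg : ∀ v ∈ supp, K.degree v ≤ k := by
    intro v _
    rw [SimpleGraph.degree]
    apply Finset.card_le_card
    intro u hu
    rw [SimpleGraph.mem_neighborFinset] at hu
    exact hmem u v hu.symm
  have hmk : 2 * m ≤ k * k := by
    rw [hdegsum]
    calc ∑ v ∈ supp, K.degree v ≤ ∑ _v ∈ supp, k := Finset.sum_le_sum hdeg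
      _ = k * k := by rw [Finset.sum_const, smul_eq_mul]
  -- maximal independent set
  have hne : (Finset.univ.filter (fun D : Finset (Fin n) =>
      D ⊆ supp ∧ ∀ u ∈ D, ∀ v ∈ D, ¬K.Adj u v)).Nonempty := by
    refine ⟨∅, ?_⟩
    simp
  obtain ⟨D, hDmem, hDmax⟩ := Finset.exists_max_image _ Finset.card hne
  simp only [Finset.mem_filter, Finset.mem_univ, true_and] at hDmem
  obtain ⟨hDsub, hDind⟩ := hDmem
  -- every vertex of supp \ D has a K-neighbor in D
  have hdom : ∀ s ∈ supp, s ∉ D → ∃ d ∈ D, K.Adj s d := by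
    intro s hs hsD
    by_contra hcon
    push_neg at hcon
    have hins : insert s D ∈ Finset.univ.filter (fun D : Finset (Fin n) =>
        D ⊆ supp ∧ ∀ u ∈ D, ∀ v ∈ D, ¬K.Adj u v) := by
      simp only [Finset.mem_filter, Finset.mem_univ, true_and]
      constructor
      · exact Finset.insert_subset hs hDsub
      · intro u hu v hv
        rw [Finset.mem_insert] at hu hv
        rcases hu with hu | hu
        · rcases hv with hv | hv
          · rw [hu, hv]; exact K.irrefl
          · rw [hu]; exact hcon v hv
        · rcases hv with hv | hv
          · rw [hv]; exact fun h => hcon u hu h.symm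
          · exact hDind u hu v hv
    have := hDmax _ hins
    rw [Finset.card_insert_of_notMem hsD] at this
    omega
  -- every vertex of D has a K-neighbor outside D
  have hDnb : ∀ d ∈ D, ∃ u, u ∉ D ∧ K.Adj d u := by
    intro d hd
    have : d ∈ supp := hDsub hd
    simp only [hsupp, Finset.mem_filter, Finset.mem_univ, true_and] at this
    obtain ⟨u, hu⟩ := this
    exact ⟨u, fun huD => hDind d hd u huD hu, hu⟩
  have hcards : D.card + (supp \ D).card = k := by
    rw [Finset.card_sdiff_of_subset hDsub]
    have := Finset.card_le_card hDsub
    omega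
  have hKadj : ∀ u v, K.Adj u v → u ≠ v ∧ ¬H.Adj u v := by
    intro u v h
    rw [hK, SimpleGraph.compl_adj] at h
    exact h
  -- choose the bigger side
  have hmain : ∃ (S : Finset (Fin n)) (g : Fin n → Fin n),
      (∀ s ∈ S, g s ∉ S ∧ s ≠ g s ∧ ¬H.Adj s (g s)) ∧ k ≤ 2 * S.card := by
    by_cases hc : k ≤ 2 * D.card
    · refine ⟨D, fun d => if hd : d ∈ D then (hDnb d hd).choose else d, ?_, hc⟩
      intro s hs
      simp only [dif_pos hs]
      obtain ⟨h1, h2⟩ := (hDnb s hs).choose_spec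
      exact ⟨h1, (hKadj _ _ h2).1, (hKadj _ _ h2).2⟩
    · refine ⟨supp \ D, fun s => if hs : s ∈ supp ∧ s ∉ D then (hdom s hs.1 hs.2).choose
        else s, ?_, by omega⟩
      intro s hs
      rw [Finset.mem_sdiff] at hs
      simp only [dif_pos hs]
      obtain ⟨h1, h2⟩ := (hdom s hs.1 hs.2).choose_spec
      refine ⟨?_, (hKadj _ _ h2).1, (hKadj _ _ h2).2⟩
      rw [Finset.mem_sdiff]
      exact fun h => h.2 h1
  obtain ⟨S, g, hg, hkS⟩ := hmain
  refine ⟨S, g, hg, ?_⟩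
  have h1 : (m : ℝ) ≤ (k : ℝ)^2 := by
    have hmk' : m ≤ k * k := by omega
    calc (m : ℝ) ≤ ((k * k : ℕ) : ℝ) := Nat.cast_le.2 hmk'
      _ = (k : ℝ)^2 := by push_cast; ring
  refine h1.trans ?_
  have : (k : ℝ) ≤ ((2 * S.card : ℕ) : ℝ) := Nat.cast_le.2 hkS
  exact pow_le_pow_left₀ (Nat.cast_nonneg _) this 2


open Classical in
/-- There exists c > 0 such that for all n and m ≥ 1: if H is a graph on
[n] with exactly C(n,2) − m edges (i.e. e(H) + m = C(n,2)), and each vertex of [n] is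
assigned independently and uniformly to one of two classes (an assignment f : [n] → Bool),
with G the complete bipartite graph between the classes (u ~ v iff f u ≠ f v), then
P(E(G) ⊆ E(H)) ≤ exp(−c·√m). The probability is the proportion of the 2^n assignments f
for which every pair u ≠ v with f u ≠ f v is an edge of H. -/
theorem stmt16 :
    ∃ c : ℝ, 0 < c ∧ ∀ n m : ℕ, 1 ≤ m →
      ∀ H : SimpleGraph (Fin n), H.edgeSet.ncard + m = n.choose 2 →
        (((Finset.univ.filter (fun f : Fin n → Bool =>
              ∀ u v : Fin n, u ≠ v → f u ≠ f v → H.Adj u v)).card : ℝ) / 2 ^ n) ≤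
          Real.exp (-c * Real.sqrt m) := by
  have hlog : 0 < Real.log 2 := Real.log_pos (by norm_num)
  refine ⟨Real.log 2 / 2, by positivity, ?_⟩
  intro n m hm H hH
  obtain ⟨S, g, hg, hmS⟩ := exists_S n m hm H hH
  have hcard := count_le n H S g hg
  have hsn : S.card ≤ n := by
    calc S.card ≤ (Finset.univ : Finset (Fin n)).card := Finset.card_le_card (Finset.subset_univ S)
      _ = n := by simp
  have h2n : (0:ℝ) < 2 ^ n := by positivity
  have h2s : (0:ℝ) < 2 ^ S.card := by positivity
  have hpow : (2:ℝ) ^ (n - S.card) * 2 ^ S.card = 2 ^ n := by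
    rw [← pow_add]
    congr 1
    exact Nat.sub_add_cancel hsn
  have step1 : (((Finset.univ.filter (fun f : Fin n → Bool =>
      ∀ u v : Fin n, u ≠ v → f u ≠ f v → H.Adj u v)).card : ℝ) / 2 ^ n) ≤ 1 / 2 ^ S.card := by
    rw [div_le_div_iff₀ h2n h2s]
    have h1 : (((Finset.univ.filter (fun f : Fin n → Bool =>
        ∀ u v : Fin n, u ≠ v → f u ≠ f v → H.Adj u v)).card : ℝ)) ≤ (2:ℝ) ^ (n - S.card) := by
      exact_mod_cast Nat.cast_le.2 hcard
    calc (((Finset.univ.filter (fun f : Fin n → Bool =>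
          ∀ u v : Fin n, u ≠ v → f u ≠ f v → H.Adj u v)).card : ℝ)) * 2 ^ S.card
        ≤ (2:ℝ) ^ (n - S.card) * 2 ^ S.card := mul_le_mul_of_nonneg_right h1 (le_of_lt h2s)
      _ = 2 ^ n := hpow
      _ = 1 * 2 ^ n := (one_mul _).symm
  refine step1.trans ?_
  have hexp : (1:ℝ) / 2 ^ S.card = Real.exp (-(S.card * Real.log 2)) := by
    rw [Real.exp_neg, Real.exp_nat_mul, Real.exp_log (by norm_num : (0:ℝ) < 2),
      one_div]
  rw [hexp, Real.exp_le_exp]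
  have hsqrt : Real.sqrt m ≤ 2 * S.card := by
    have h1 : Real.sqrt m ≤ Real.sqrt (((2 * S.card : ℕ) : ℝ) ^ 2) := Real.sqrt_le_sqrt hmS
    rwa [Real.sqrt_sq (by positivity), Nat.cast_mul, Nat.cast_ofNat] at h1
  have h0 : 0 ≤ Real.sqrt m := Real.sqrt_nonneg _
  nlinarith [hsqrt, hlog, h0]
end
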